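/- arXiv:2506.17071 — 7 statements merged into one kernel-verified Lean document; each statement's English description precedes it below -/
import Mathlib

section
/- Let K be an algebraically closed field equipped with a norm (a normed field). Suppose given an integer R ≥ 1 and, for each r = 1, …, R, a ℤ-graded K-vector space E_r = ⊕_{n∈ℤ} E_rⁿ with each E_rⁿ finite-dimensional and E_rⁿ = 0 for all but finitely many n, an endomorphism F of each E_rⁿ, and K-linear differentials d_r : E_rⁿ → E_rⁿ⁺¹ satisfying d_r ∘ d_r = 0 and commuting with F. Suppose that for each 1 ≤ r < R and each n there is an F-equivariant isomorphism E_{r+1}ⁿ ≅ ker(d_r : E_rⁿ → E_rⁿ⁺¹) / im(d_r : E_rⁿ⁻¹ → E_rⁿ). Finally, suppose given finite-dimensional K-vector spaces Hⁿ (n ∈ ℤ), nonzero for only finitely many n, each with an endomorphism F, such that for every n the space Hⁿ admits a finite F-invariant filtration whose direct sum of successive subquotients is F-equivariantly isomorphic to E_Rⁿ. Then for every integer I one has |∑_{n ≥ I} (−1)ⁿ Tr(F on E₁ⁿ) − ∑_{n ≥ I} (−1)ⁿ Tr(F on Hⁿ)| ≤ |F, E₁^I|, where |F, V| denotes the L¹-trace.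 -/
open Module LinearMap Set Function


/-- The `L¹`-trace of an endomorphism of a `K`-vector space: the sum over the eigenvalues `μ`
of `dim (generalized eigenspace of μ) · ‖μ‖`. -/
noncomputable def L1Trace (K : Type*) [NormedField K] {V : Type*} [AddCommGroup V]
    [Module K V] (F : V →ₗ[K] V) : ℝ :=
  ∑ᶠ μ : K, (Module.finrank K ↥(Module.End.maxGenEigenspace F μ) : ℝ) * ‖μ‖

/-- The subquotient `q ⧸ (p ∩ q)` of a pair of submodules. -/
abbrev SubQuot {K V : Type*} [Field K] [AddCommGroup V] [Module K V]
    (p q : Submodule K V) : Type _ :=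
  ↥q ⧸ p.comap q.subtype

/-- The endomorphism induced on the subquotient `q ⧸ (p ∩ q)` by an endomorphism `F`
preserving both `p` and `q`. -/
noncomputable def subQuotEnd {K V : Type*} [Field K] [AddCommGroup V] [Module K V]
    (F : V →ₗ[K] V) (p q : Submodule K V)
    (hq : ∀ x ∈ q, F x ∈ q) (hp : ∀ x ∈ p, F x ∈ p) :
    SubQuot p q →ₗ[K] SubQuot p q :=
  Submodule.mapQ _ _ (F.restrict hq) (fun x hx => by
    simp only [Submodule.mem_comap, LinearMap.restrict_coe_apply] at hx ⊢
    exact hp _ hx)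



namespace STAux

variable {K : Type*} [Field K] {V : Type*} [AddCommGroup V] [Module K V]
  {W : Type*} [AddCommGroup W] [Module K W]

/-- Multiplicity function: dimension of the generalized eigenspace. -/
noncomputable def mult (F : V →ₗ[K] V) (μ : K) : ℕ :=
  finrank K ↥(Module.End.maxGenEigenspace F μ)

lemma comm_pow_sub {F : V →ₗ[K] V} {G : W →ₗ[K] W} {e : V →ₗ[K] W}
    (h : ∀ x, e (F x) = G (e x)) (μ : K) (k : ℕ) (x : V) :
    e (((F - μ • (1 : Module.End K V)) ^ k) x)
      = ((G - μ • (1 : Module.End K W)) ^ k) (e x) := by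
  induction k generalizing x with
  | zero => simp
  | succ k ih =>
    have h1 : e ((F - μ • (1 : Module.End K V)) x) = (G - μ • (1 : Module.End K W)) (e x) := by
      simp only [LinearMap.sub_apply, LinearMap.smul_apply, Module.End.one_apply, map_sub,
        map_smul, h]
    calc e (((F - μ • (1 : Module.End K V)) ^ (k+1)) x)
        = e (((F - μ • (1 : Module.End K V)) ^ k) ((F - μ • (1 : Module.End K V)) x)) := by
          rw [pow_succ, Module.End.mul_apply]
      _ = ((G - μ • (1 : Module.End K W)) ^ k) ((G - μ • (1 : Module.End K W)) (e x)) := by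
          rw [ih, h1]
      _ = _ := by rw [pow_succ, Module.End.mul_apply]

lemma mem_maxGen_of_comm {F : V →ₗ[K] V} {G : W →ₗ[K] W} {e : V →ₗ[K] W}
    (h : ∀ x, e (F x) = G (e x)) {μ : K} {x : V}
    (hx : x ∈ Module.End.maxGenEigenspace F μ) :
    e x ∈ Module.End.maxGenEigenspace G μ := by
  rw [Module.End.mem_maxGenEigenspace] at hx ⊢
  obtain ⟨k, hk⟩ := hx
  exact ⟨k, by rw [← comm_pow_sub h, hk, map_zero]⟩

lemma maxGen_map_of_equiv (e : V ≃ₗ[K] W) {F : V →ₗ[K] V} {G : W →ₗ[K] W}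
    (h : ∀ x, e (F x) = G (e x)) (μ : K) :
    (Module.End.maxGenEigenspace F μ).map (e : V →ₗ[K] W)
      = Module.End.maxGenEigenspace G μ := by
  apply le_antisymm
  · rintro _ ⟨x, hx, rfl⟩
    exact mem_maxGen_of_comm (e := (e : V →ₗ[K] W)) h hx
  · intro y hy
    have h' : ∀ y, e.symm (G y) = F (e.symm y) := fun y => by
      apply e.injective; rw [h]; simp
    exact ⟨e.symm y, mem_maxGen_of_comm (e := (e.symm : W →ₗ[K] V)) h' hy, by simp⟩

lemma mult_congr (e : V ≃ₗ[K] W) {F : V →ₗ[K] V} {G : W →ₗ[K] W}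
    (h : ∀ x, e (F x) = G (e x)) (μ : K) :
    mult G μ = mult F μ := by
  rw [mult, ← maxGen_map_of_equiv e h μ, mult]
  exact ((Submodule.equivMapOfInjective _ e.injective _).symm.finrank_eq)

lemma trace_congr [FiniteDimensional K V] (e : V ≃ₗ[K] W) {F : V →ₗ[K] V} {G : W →ₗ[K] W}
    (h : ∀ x, e (F x) = G (e x)) :
    trace K W G = trace K V F := by
  have hG : G = e.conj F := by
    ext w
    rw [LinearEquiv.conj_apply]
    simp only [coe_comp, LinearEquiv.coe_coe, comp_apply, h, LinearEquiv.apply_symm_apply]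
  rw [hG, trace_conj']

lemma mult_support_finite [FiniteDimensional K V] (F : V →ₗ[K] V) :
    (support (mult F)).Finite := by
  apply Set.Finite.subset (WellFoundedGT.finite_ne_bot_of_iSupIndep
    (Module.End.independent_maxGenEigenspace (R := K) (M := V) F))
  intro μ hμ
  simp only [mem_setOf_eq]
  intro hbot
  apply hμ
  rw [mult, hbot, finrank_bot]

lemma finrank_comap_subtype (q X : Submodule K V) :
    finrank K ↥(X.comap q.subtype) = finrank K ↥(q ⊓ X) := by
  rw [← Submodule.finrank_map_subtype_eq q, Submodule.map_comap_subtype]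

lemma mult_restrict_eq [FiniteDimensional K V] (F : V →ₗ[K] V) (p : Submodule K V)
    (hp : ∀ x ∈ p, F x ∈ p) (μ : K) :
    mult (F.restrict hp) μ = finrank K ↥(p ⊓ Module.End.maxGenEigenspace F μ) := by
  rw [mult, Module.End.maxGenEigenspace, Module.End.genEigenspace_restrict F p ⊤ μ hp,
    finrank_comap_subtype]

lemma mult_restrict_le [FiniteDimensional K V] (F : V →ₗ[K] V) (p : Submodule K V)
    (hp : ∀ x ∈ p, F x ∈ p) (μ : K) :
    mult (F.restrict hp) μ ≤ mult F μ := by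
  rw [mult_restrict_eq]
  exact Submodule.finrank_mono inf_le_right


section AlgClosed

variable [IsAlgClosed K]

lemma mult_finsum_eq [FiniteDimensional K V] (F : V →ₗ[K] V) :
    ∑ᶠ μ, mult F μ = finrank K V := by
  classical
  set N : K → Submodule K V := fun μ => Module.End.maxGenEigenspace F μ with hN_def
  have hind : iSupIndep N := Module.End.independent_maxGenEigenspace F
  have hds : DirectSum.IsInternal N :=
    DirectSum.isInternal_submodule_of_iSupIndep_of_iSup_eq_top hind
      (Module.End.iSup_maxGenEigenspace_eq_top F)
  have hfin : {μ | N μ ≠ ⊥}.Finite := WellFoundedGT.finite_ne_bot_of_iSupIndep hind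
  have hds' : DirectSum.IsInternal (fun μ : {i | N i ≠ ⊥} => N ↑μ) :=
    DirectSum.isInternal_ne_bot_iff.mpr hds
  letI : Fintype {i | N i ≠ ⊥} := hfin.fintype
  have e : (DirectSum {i | N i ≠ ⊥} (fun μ => ↥(N ↑μ))) ≃ₗ[K] V :=
    LinearEquiv.ofBijective (DirectSum.coeLinearMap _) hds'
  have h1 : finrank K V = ∑ μ : {i | N i ≠ ⊥}, finrank K ↥(N ↑μ) := by
    rw [← e.finrank_eq, finrank_directSum]
  have hsupp : support (mult F) ⊆ ↑hfin.toFinset := by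
    intro μ hμ
    simp only [Finset.coe_sort_coe, Set.Finite.coe_toFinset, mem_setOf_eq]
    intro hbot
    apply hμ
    rw [mult]
    show finrank K ↥(N μ) = 0
    rw [hbot, finrank_bot]
  rw [finsum_eq_sum_of_support_subset (mult F) hsupp, h1,
    ← Finset.sum_coe_sort hfin.toFinset (mult F)]
  exact (Fintype.sum_equiv hfin.subtypeEquivToFinset
    (fun μ => finrank K ↥(N ↑μ)) (fun i => mult F ↑i) (fun μ => rfl)).symm

lemma trace_eq_finsum_mult [FiniteDimensional K V] (F : V →ₗ[K] V) :
    trace K V F = ∑ᶠ μ : K, (mult F μ : K) * μ := by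
  classical
  set N : K → Submodule K V := fun μ => Module.End.maxGenEigenspace F μ with hN_def
  have hind : iSupIndep N := Module.End.independent_maxGenEigenspace F
  have hds : DirectSum.IsInternal N :=
    DirectSum.isInternal_submodule_of_iSupIndep_of_iSup_eq_top hind
      (Module.End.iSup_maxGenEigenspace_eq_top F)
  have hfin : {μ | N μ ≠ ⊥}.Finite := WellFoundedGT.finite_ne_bot_of_iSupIndep hind
  have hf : ∀ μ, MapsTo F (N μ) (N μ) := fun μ =>
    Module.End.mapsTo_maxGenEigenspace_of_comm rfl μ
  have hsupp : support (fun μ : K => (mult F μ : K) * μ) ⊆ ↑hfin.toFinset := by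
    intro μ hμ
    simp only [Finset.coe_sort_coe, Set.Finite.coe_toFinset, mem_setOf_eq]
    intro hbot
    apply hμ
    have : mult F μ = 0 := by
      rw [mult]; show finrank K ↥(N μ) = 0; rw [hbot, finrank_bot]
    simp [this]
  rw [LinearMap.trace_eq_sum_trace_restrict' hds hfin hf,
    finsum_eq_sum_of_support_subset _ hsupp]
  refine Finset.sum_congr rfl fun μ _ => ?_
  have hmapsto : MapsTo (F - algebraMap K (Module.End K V) μ) (N μ) (N μ) := by
    intro x hx
    simp only [SetLike.mem_coe, LinearMap.sub_apply, Module.algebraMap_end_apply]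
    exact sub_mem (hf μ hx) (Submodule.smul_mem _ _ hx)
  have hnil : IsNilpotent ((F - algebraMap K (Module.End K V) μ).restrict hmapsto) :=
    Module.End.isNilpotent_restrict_maxGenEigenspace_sub_algebraMap F μ hmapsto
  have htr0 : trace K ↥(N μ) ((F - algebraMap K (Module.End K V) μ).restrict hmapsto) = 0 :=
    (LinearMap.isNilpotent_trace_of_isNilpotent hnil).eq_zero
  have hsplit : F.restrict (hf μ) =
      (F - algebraMap K (Module.End K V) μ).restrict hmapsto + μ • LinearMap.id := by
    ext x
    simp only [LinearMap.add_apply, LinearMap.smul_apply, LinearMap.id_apply,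
      Submodule.coe_add, SetLike.val_smul, LinearMap.restrict_coe_apply,
      LinearMap.sub_apply, Module.algebraMap_end_apply]
    change F (x : V) = (F (x : V) - μ • (x : V)) + μ • (x : V)
    rw [sub_add_cancel]
  rw [hsplit, map_add, htr0, zero_add, map_smul, trace_id, smul_eq_mul, mult]
  exact mul_comm _ _

lemma mult_eq_add_of_invariant [FiniteDimensional K V] (F : V →ₗ[K] V) (p : Submodule K V)
    (hp : ∀ x ∈ p, F x ∈ p) (μ : K) :
    mult F μ = mult (F.restrict hp) μ
      + mult (p.mapQ p F (fun x hx => hp x hx)) μ := by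
  classical
  set G := p.mapQ p F (fun x hx => hp x hx) with hG
  have hcomm : ∀ x : V, p.mkQ (F x) = G (p.mkQ x) := fun x =>
    (Submodule.mapQ_apply _ _ _ _).symm
  have key : ∀ ν : K, mult F ν ≤ mult (F.restrict hp) ν + mult G ν := by
    intro ν
    set Nν := Module.End.maxGenEigenspace F ν with hNν
    have h1 : finrank K ↥(LinearMap.range (p.mkQ ∘ₗ Nν.subtype))
        + finrank K ↥(LinearMap.ker (p.mkQ ∘ₗ Nν.subtype)) = mult F ν :=
      LinearMap.finrank_range_add_finrank_ker _
    have hker : LinearMap.ker (p.mkQ ∘ₗ Nν.subtype) = p.comap Nν.subtype := by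
      rw [LinearMap.ker_comp, Submodule.ker_mkQ]
    have hrange : LinearMap.range (p.mkQ ∘ₗ Nν.subtype) = Nν.map p.mkQ := by
      rw [LinearMap.range_comp, Submodule.range_subtype]
    have hle : Nν.map p.mkQ ≤ Module.End.maxGenEigenspace G ν := by
      rintro _ ⟨x, hx, rfl⟩
      exact mem_maxGen_of_comm hcomm hx
    have h2 : mult (F.restrict hp) ν = finrank K ↥(p.comap Nν.subtype) := by
      rw [mult_restrict_eq F p hp, finrank_comap_subtype, inf_comm]
    calc mult F ν
        = finrank K ↥(Nν.map p.mkQ) + finrank K ↥(p.comap Nν.subtype) := by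
          rw [← h1, hker, hrange]
      _ ≤ mult G ν + mult (F.restrict hp) ν :=
          add_le_add (Submodule.finrank_mono hle) (le_of_eq h2.symm)
      _ = mult (F.restrict hp) ν + mult G ν := add_comm _ _
  have hq : finrank K (V ⧸ p) + finrank K ↥p = finrank K V :=
    Submodule.finrank_quotient_add_finrank p
  set s : Finset K := (((mult_support_finite F).toFinset ∪
      (mult_support_finite (F.restrict hp)).toFinset) ∪
      (mult_support_finite G).toFinset) ∪ {μ} with hs
  have hF : ∑ ν ∈ s, mult F ν = finrank K V := by
    rw [← mult_finsum_eq F, finsum_eq_sum_of_support_subset]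
    intro ν hν
    simp only [hs, Finset.coe_union, Set.mem_union]
    left; left; left
    exact (mult_support_finite F).mem_toFinset.mpr hν
  have hr : ∑ ν ∈ s, mult (F.restrict hp) ν = finrank K ↥p := by
    rw [← mult_finsum_eq (F.restrict hp), finsum_eq_sum_of_support_subset]
    intro ν hν
    simp only [hs, Finset.coe_union, Set.mem_union]
    left; left; right
    exact (mult_support_finite (F.restrict hp)).mem_toFinset.mpr hν
  have hGs : ∑ ν ∈ s, mult G ν = finrank K (V ⧸ p) := by
    rw [← mult_finsum_eq G, finsum_eq_sum_of_support_subset]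
    intro ν hν
    simp only [hs, Finset.coe_union, Set.mem_union]
    left; right
    exact (mult_support_finite G).mem_toFinset.mpr hν
  have hsum_eq : ∑ ν ∈ s, mult F ν = ∑ ν ∈ s, (mult (F.restrict hp) ν + mult G ν) := by
    rw [Finset.sum_add_distrib, hF, hr, hGs]
    omega
  exact (Finset.sum_eq_sum_iff_of_le (fun i _ => key i)).mp hsum_eq μ (by simp [hs])

lemma trace_eq_add_of_invariant [FiniteDimensional K V] (F : V →ₗ[K] V) (p : Submodule K V)
    (hp : ∀ x ∈ p, F x ∈ p) :
    trace K V F = trace K ↥p (F.restrict hp)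
      + trace K (V ⧸ p) (p.mapQ p F (fun x hx => hp x hx)) := by
  set G := p.mapQ p F (fun x hx => hp x hx) with hG
  rw [trace_eq_finsum_mult F, trace_eq_finsum_mult (F.restrict hp), trace_eq_finsum_mult G]
  have h1 : ∀ ν : K, (mult F ν : K) * ν
      = (mult (F.restrict hp) ν : K) * ν + (mult G ν : K) * ν := by
    intro ν
    rw [mult_eq_add_of_invariant F p hp ν]
    push_cast
    ring
  rw [finsum_congr h1]
  refine finsum_add_distrib ?_ ?_
  · exact ((mult_support_finite (F.restrict hp)).subset (fun ν hν => by
      simp only [mem_support] at hν ⊢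
      intro h0; apply hν; simp [h0]))
  · exact ((mult_support_finite G).subset (fun ν hν => by
      simp only [mem_support] at hν ⊢
      intro h0; apply hν; simp [h0]))

end AlgClosed


section Transfer

lemma restrict_restrict_comm {F : V →ₗ[K] V} {p q : Submodule K V}
    (hpq : p ≤ q) (hq : ∀ x ∈ q, F x ∈ q) (hp : ∀ x ∈ p, F x ∈ p)
    (hp' : ∀ x ∈ p.comap q.subtype, F.restrict hq x ∈ p.comap q.subtype) (x) :
    (Submodule.comapSubtypeEquivOfLe hpq) (((F.restrict hq).restrict hp') x)
      = (F.restrict hp) ((Submodule.comapSubtypeEquivOfLe hpq) x) := by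
  apply Subtype.ext
  simp [Submodule.comapSubtypeEquivOfLe_apply_coe, LinearMap.restrict_coe_apply]

lemma mult_restrict_restrict {F : V →ₗ[K] V} {p q : Submodule K V}
    (hpq : p ≤ q) (hq : ∀ x ∈ q, F x ∈ q) (hp : ∀ x ∈ p, F x ∈ p)
    (hp' : ∀ x ∈ p.comap q.subtype, F.restrict hq x ∈ p.comap q.subtype) (μ : K) :
    mult ((F.restrict hq).restrict hp') μ = mult (F.restrict hp) μ :=
  (mult_congr (Submodule.comapSubtypeEquivOfLe hpq)
    (restrict_restrict_comm hpq hq hp hp') μ).symm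

lemma trace_restrict_restrict [FiniteDimensional K V] {F : V →ₗ[K] V} {p q : Submodule K V}
    (hpq : p ≤ q) (hq : ∀ x ∈ q, F x ∈ q) (hp : ∀ x ∈ p, F x ∈ p)
    (hp' : ∀ x ∈ p.comap q.subtype, F.restrict hq x ∈ p.comap q.subtype) :
    trace K _ ((F.restrict hq).restrict hp') = trace K ↥p (F.restrict hp) :=
  (trace_congr (Submodule.comapSubtypeEquivOfLe hpq)
    (restrict_restrict_comm hpq hq hp hp')).symm

/-- Equivariance of `quotKerEquivRange`. -/
lemma quotKerEquivRange_comm (d : V →ₗ[K] W) {F : V →ₗ[K] V} {G : W →ₗ[K] W}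
    (hc : ∀ x, d (F x) = G (d x))
    (hker : ∀ x ∈ ker d, F x ∈ ker d)
    (hran : ∀ y ∈ LinearMap.range d, G y ∈ LinearMap.range d) (y) :
    d.quotKerEquivRange (((ker d).mapQ (ker d) F (fun x hx => hker x hx)) y)
      = (G.restrict hran) (d.quotKerEquivRange y) := by
  obtain ⟨x, rfl⟩ := Submodule.Quotient.mk_surjective _ y
  rw [Submodule.mapQ_apply]
  apply Subtype.ext
  have h2 : ∀ z : V, (d.quotKerEquivRange (Submodule.Quotient.mk z) : W) = d z := fun z =>
    d.quotKerEquivRange_apply_mk z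
  rw [h2, LinearMap.restrict_coe_apply, h2, hc]

lemma mult_quot_ker_eq_range (d : V →ₗ[K] W) {F : V →ₗ[K] V} {G : W →ₗ[K] W}
    (hc : ∀ x, d (F x) = G (d x))
    (hker : ∀ x ∈ ker d, F x ∈ ker d)
    (hran : ∀ y ∈ LinearMap.range d, G y ∈ LinearMap.range d) (μ : K) :
    mult ((ker d).mapQ (ker d) F (fun x hx => hker x hx)) μ
      = mult (G.restrict hran) μ :=
  (mult_congr d.quotKerEquivRange (quotKerEquivRange_comm d hc hker hran) μ).symm

lemma trace_quot_ker_eq_range [FiniteDimensional K V] (d : V →ₗ[K] W)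
    {F : V →ₗ[K] V} {G : W →ₗ[K] W}
    (hc : ∀ x, d (F x) = G (d x))
    (hker : ∀ x ∈ ker d, F x ∈ ker d)
    (hran : ∀ y ∈ LinearMap.range d, G y ∈ LinearMap.range d) :
    trace K _ ((ker d).mapQ (ker d) F (fun x hx => hker x hx))
      = trace K _ (G.restrict hran) :=
  (trace_congr d.quotKerEquivRange (quotKerEquivRange_comm d hc hker hran)).symm

/-- A surjective equivariant map identifies the quotient by its kernel with the target. -/
noncomputable def quotKerEquivOfSurj (φ : V →ₗ[K] W) (hφ : Surjective φ) :
    (V ⧸ ker φ) ≃ₗ[K] W :=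
  LinearEquiv.ofBijective ((ker φ).liftQ φ le_rfl)
    ⟨by rw [← LinearMap.ker_eq_bot]; exact Submodule.ker_liftQ_eq_bot _ _ _ le_rfl,
     by rw [← LinearMap.range_eq_top, Submodule.range_liftQ, LinearMap.range_eq_top]; exact hφ⟩

lemma quotKerEquivOfSurj_mk (φ : V →ₗ[K] W) (hφ : Surjective φ) (x : V) :
    quotKerEquivOfSurj φ hφ (Submodule.Quotient.mk x) = φ x := by
  exact Submodule.liftQ_apply (h := le_rfl) (ker φ) φ x

lemma quotKerEquivOfSurj_comm (φ : V →ₗ[K] W) (hφ : Surjective φ)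
    {F : V →ₗ[K] V} {G : W →ₗ[K] W} (hc : ∀ x, φ (F x) = G (φ x))
    (hker : ∀ x ∈ ker φ, F x ∈ ker φ) (y) :
    quotKerEquivOfSurj φ hφ (((ker φ).mapQ (ker φ) F (fun x hx => hker x hx)) y)
      = G (quotKerEquivOfSurj φ hφ y) := by
  obtain ⟨x, rfl⟩ := Submodule.Quotient.mk_surjective _ y
  rw [Submodule.mapQ_apply, quotKerEquivOfSurj_mk, quotKerEquivOfSurj_mk, hc]

lemma mult_quot_ker_of_surj (φ : V →ₗ[K] W) (hφ : Surjective φ)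
    {F : V →ₗ[K] V} {G : W →ₗ[K] W} (hc : ∀ x, φ (F x) = G (φ x))
    (hker : ∀ x ∈ ker φ, F x ∈ ker φ) (μ : K) :
    mult ((ker φ).mapQ (ker φ) F (fun x hx => hker x hx)) μ = mult G μ :=
  (mult_congr (quotKerEquivOfSurj φ hφ) (quotKerEquivOfSurj_comm φ hφ hc hker) μ).symm


lemma trace_quot_ker_of_surj [FiniteDimensional K V] (φ : V →ₗ[K] W) (hφ : Surjective φ)
    {F : V →ₗ[K] V} {G : W →ₗ[K] W} (hc : ∀ x, φ (F x) = G (φ x))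
    (hker : ∀ x ∈ ker φ, F x ∈ ker φ) :
    trace K _ ((ker φ).mapQ (ker φ) F (fun x hx => hker x hx)) = trace K W G :=
  (trace_congr (quotKerEquivOfSurj φ hφ) (quotKerEquivOfSurj_comm φ hφ hc hker)).symm

end Transfer

section Sums

lemma finsum_Ici_eq_sum_Icc {M : Type*} [AddCommMonoid M] (g : ℤ → M) (I N : ℤ)
    (hg : ∀ n, N < n → g n = 0) :
    (∑ᶠ (n : ℤ) (_ : I ≤ n), g n) = ∑ n ∈ Finset.Icc I N, g n := by
  have hfin : ({n : ℤ | I ≤ n} ∩ support g).Finite := by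
    apply Set.Finite.subset (Set.finite_Icc I N)
    rintro n ⟨h1, h2⟩
    simp only [mem_setOf_eq] at h1
    simp only [mem_support] at h2
    simp only [Set.mem_Icc]
    exact ⟨h1, by by_contra h; exact h2 (hg n (by omega))⟩
  rw [show (∑ᶠ (n : ℤ) (_ : I ≤ n), g n) = ∑ᶠ (n : ℤ) (_ : n ∈ {n : ℤ | I ≤ n}), g n from rfl,
    finsum_mem_eq_sum g hfin]
  apply Finset.sum_subset
  · intro n hn
    simp only [Set.Finite.mem_toFinset, Set.mem_inter_iff, mem_setOf_eq, mem_support] at hn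
    simp only [Finset.mem_Icc]
    exact ⟨hn.1, by by_contra h; exact hn.2 (hg n (by omega))⟩
  · intro n hn hn'
    simp only [Set.Finite.mem_toFinset, Set.mem_inter_iff, mem_setOf_eq, mem_support,
      not_and, not_not] at hn'
    simp only [Finset.mem_Icc] at hn
    exact hn' hn.1

lemma sum_Icc_telescope {M : Type*} [AddCommGroup M] (f : ℤ → M) (I N : ℤ) (hIN : I ≤ N) :
    ∑ n ∈ Finset.Icc I N, (f (n-1) - f n) = f (I-1) - f N := by
  obtain ⟨k, rfl⟩ : ∃ k : ℕ, N = I + k := ⟨(N - I).toNat, by omega⟩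
  clear hIN
  induction k with
  | zero => simp
  | succ k ih =>
    have h1 : Finset.Icc I (I + ((k:ℤ)+1)) = insert (I + k + 1) (Finset.Icc I (I + k)) := by
      ext n
      simp only [Finset.mem_Icc, Finset.mem_insert]
      omega
    have h2 : (I + ((k+1 : ℕ) : ℤ)) = I + ((k:ℤ)+1) := by push_cast; ring
    rw [h2, h1, Finset.sum_insert (by simp only [Finset.mem_Icc]; omega), ih]
    rw [show I + (k:ℤ) + 1 - 1 = I + (k:ℤ) by ring]
    abel

lemma norm_trace_le_L1 {K : Type*} [NormedField K] [IsAlgClosed K] {V : Type*}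
    [AddCommGroup V] [Module K V] [FiniteDimensional K V] (F : V →ₗ[K] V) :
    ‖trace K V F‖ ≤ ∑ᶠ μ : K, (mult F μ : ℝ) * ‖μ‖ := by
  classical
  rw [trace_eq_finsum_mult]
  set s := (mult_support_finite F).toFinset with hs
  have h1 : support (fun μ : K => (mult F μ : K) * μ) ⊆ ↑s := by
    intro μ hμ
    rw [hs, (mult_support_finite F).coe_toFinset]
    simp only [mem_support] at hμ ⊢
    intro h0; apply hμ; simp [h0]
  have h2 : support (fun μ : K => (mult F μ : ℝ) * ‖μ‖) ⊆ ↑s := by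
    intro μ hμ
    rw [hs, (mult_support_finite F).coe_toFinset]
    simp only [mem_support] at hμ ⊢
    intro h0; apply hμ; simp [h0]
  rw [finsum_eq_sum_of_support_subset _ h1, finsum_eq_sum_of_support_subset _ h2]
  refine (norm_sum_le _ _).trans ?_
  apply Finset.sum_le_sum
  intro μ _
  have : (mult F μ : K) * μ = (mult F μ) • μ := by rw [nsmul_eq_mul]
  rw [this]
  exact norm_nsmul_le

end Sums

section PiTrace

variable {ι : Type*} [Fintype ι] [DecidableEq ι] {Vf : ι → Type*}
  [∀ j, AddCommGroup (Vf j)] [∀ j, Module K (Vf j)] [∀ j, FiniteDimensional K (Vf j)]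

lemma trace_pi_eq_sum (F : ∀ j, Vf j →ₗ[K] Vf j) :
    trace K (∀ j, Vf j) (LinearMap.pi (fun j => (F j).comp (LinearMap.proj j)))
      = ∑ j, trace K (Vf j) (F j) := by
  classical
  set Φ := LinearMap.pi (fun j => (F j).comp (LinearMap.proj (φ := Vf) j)) with hΦ
  have hΦap : ∀ (y : ∀ j, Vf j) (i : ι), Φ y i = F i (y i) := fun y i => rfl
  set N : ι → Submodule K (∀ j, Vf j) := fun j => LinearMap.range (LinearMap.single K Vf j)
    with hN
  have hsingle : ∀ (j : ι) (x : Vf j), Φ (Pi.single j x) = Pi.single j (F j x) := by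
    intro j x
    funext i
    rw [hΦap]
    by_cases hij : i = j
    · subst hij; simp
    · simp [Pi.single_eq_of_ne hij]
  have hind : iSupIndep N := by
    rw [iSupIndep_def]
    intro i
    have hd := LinearMap.disjoint_single_single K Vf {i} {i}ᶜ disjoint_compl_right
    have h1 : (⨆ j ∈ ({i} : Set ι), LinearMap.range (LinearMap.single K Vf j)) = N i := by
      simp [hN]
    have h2 : (⨆ j ∈ ({i}ᶜ : Set ι), LinearMap.range (LinearMap.single K Vf j))
        = ⨆ (j) (_ : j ≠ i), N j := by
      apply iSup_congr
      intro j
      simp [hN, Set.mem_compl_singleton_iff]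
    rwa [h1, h2] at hd
  have htop : iSup N = ⊤ := LinearMap.iSup_range_single K Vf
  have hds : DirectSum.IsInternal N :=
    DirectSum.isInternal_submodule_of_iSupIndep_of_iSup_eq_top hind htop
  have hf : ∀ j, MapsTo Φ (N j) (N j) := by
    rintro j _ ⟨x, rfl⟩
    have : (LinearMap.single K Vf j) x = Pi.single j x := rfl
    rw [SetLike.mem_coe, this, hsingle]
    exact ⟨F j x, rfl⟩
  rw [LinearMap.trace_eq_sum_trace_restrict hds hf]
  refine Finset.sum_congr rfl fun j _ => ?_
  have hinj : Injective (LinearMap.single K Vf j) := Pi.single_injective j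
  exact trace_congr (LinearEquiv.ofInjective (LinearMap.single K Vf j) hinj)
    (fun x => Subtype.ext (by
      simp only [LinearEquiv.ofInjective_apply, LinearMap.restrict_coe_apply]
      exact (hsingle j x).symm))

end PiTrace

section Filtration

variable [IsAlgClosed K]

lemma trace_restrict_top [FiniteDimensional K V] (F : V →ₗ[K] V) (p : Submodule K V)
    (hp : ∀ x ∈ p, F x ∈ p) (htop : p = ⊤) :
    trace K ↥p (F.restrict hp) = trace K V F := by
  subst htop
  exact (trace_congr Submodule.topEquiv (fun x => rfl)).symm

lemma trace_restrict_succ [FiniteDimensional K V] (F : V →ₗ[K] V) (p q : Submodule K V)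
    (hpq : p ≤ q) (hq : ∀ x ∈ q, F x ∈ q) (hp : ∀ x ∈ p, F x ∈ p) :
    trace K ↥q (F.restrict hq) = trace K ↥p (F.restrict hp)
      + trace K (SubQuot p q) (subQuotEnd F p q hq hp) := by
  have hp' : ∀ x ∈ p.comap q.subtype, F.restrict hq x ∈ p.comap q.subtype := by
    intro x hx
    simp only [Submodule.mem_comap, LinearMap.restrict_coe_apply] at hx ⊢
    exact hp _ hx
  rw [trace_eq_add_of_invariant (F.restrict hq) (p.comap q.subtype) hp',
    trace_restrict_restrict hpq hq hp hp']
  rfl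

lemma trace_eq_sum_filtration [FiniteDimensional K V] (F : V →ₗ[K] V) {m : ℕ}
    (W : Fin (m+1) → Submodule K V)
    (hmono : Monotone W) (h0 : W 0 = ⊥) (hlast : W (Fin.last m) = ⊤)
    (hinv : ∀ (j : Fin (m+1)) (x : V), x ∈ W j → F x ∈ W j) :
    trace K V F = ∑ j : Fin m, trace K (SubQuot (W j.castSucc) (W j.succ))
      (subQuotEnd F (W j.castSucc) (W j.succ)
        (fun x hx => hinv j.succ x hx) (fun x hx => hinv j.castSucc x hx)) := by
  classical
  have key : ∀ (k : ℕ) (hk : k < m + 1),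
      trace K ↥(W ⟨k, hk⟩) (F.restrict (fun x hx => hinv ⟨k, hk⟩ x hx))
        = ∑ j ∈ Finset.univ.filter (fun j : Fin m => j.1 < k),
            trace K (SubQuot (W j.castSucc) (W j.succ))
              (subQuotEnd F (W j.castSucc) (W j.succ)
                (fun x hx => hinv j.succ x hx) (fun x hx => hinv j.castSucc x hx)) := by
    intro k
    induction k with
    | zero =>
      intro hk
      have hW0 : W ⟨0, hk⟩ = ⊥ := h0
      have : Subsingleton ↥(W ⟨0, hk⟩) := by rw [hW0]; infer_instance
      rw [Subsingleton.elim (F.restrict (fun x hx => hinv ⟨0, hk⟩ x hx)) 0, map_zero]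
      have : Finset.univ.filter (fun j : Fin m => j.1 < 0) = ∅ := by
        ext j; simp
      rw [this, Finset.sum_empty]
    | succ k ih =>
      intro hk
      have hk' : k < m + 1 := by omega
      have hkm : k < m := by omega
      set j : Fin m := ⟨k, hkm⟩ with hj
      have hcs : j.castSucc = ⟨k, hk'⟩ := rfl
      have hsc : j.succ = ⟨k+1, hk⟩ := rfl
      have hle : W j.castSucc ≤ W j.succ := hmono (by
        rw [hcs, hsc]; exact Fin.mk_le_mk.mpr (by omega))
      have hstep := trace_restrict_succ F (W j.castSucc) (W j.succ) hle
        (fun x hx => hinv j.succ x hx) (fun x hx => hinv j.castSucc x hx)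
      rw [hcs, hsc] at hstep
      rw [hstep, ih hk']
      have hins : Finset.univ.filter (fun i : Fin m => i.1 < k + 1)
          = insert j (Finset.univ.filter (fun i : Fin m => i.1 < k)) := by
        ext i
        simp only [Finset.mem_filter, Finset.mem_univ, true_and, Finset.mem_insert,
          Fin.ext_iff, hj]
        omega
      rw [hins, Finset.sum_insert (by simp [hj])]
      rw [hcs, hsc]
      ring
  have hfin := key m (by omega)
  have hWm : (⟨m, by omega⟩ : Fin (m+1)) = Fin.last m := rfl
  have htopW : W ⟨m, by omega⟩ = ⊤ := by rw [hWm, hlast]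
  have hfull : Finset.univ.filter (fun j : Fin m => j.1 < m) = Finset.univ := by
    ext j; simp [j.isLt]
  rw [hfull] at hfin
  rw [← hfin]
  exact (trace_restrict_top F _ _ htopW).symm

end Filtration

end STAux

/-- Trace comparison for a spectral sequence of vector spaces with an
endomorphism `F` over an algebraically closed normed field:  with pages `E 0, …, E (R-1)`
(representing `E₁, …, E_R`), differentials `d`, `F`-equivariant identifications of each page
with the homology of the previous one, and an abutment `H` each of whose pieces carries a
finite `F`-invariant filtration whose associated graded is `F`-equivariantly isomorphic to the
last page, one has, for every integer `I`,
`|∑_{n ≥ I} (−1)ⁿ Tr(F | E₁ⁿ) − ∑_{n ≥ I} (−1)ⁿ Tr(F | Hⁿ)| ≤ |F, E₁^I|`. -/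
theorem trace_spectral_sequence_bound
    {K : Type*} [NormedField K] [IsAlgClosed K]
    (R : ℕ) (hR : 1 ≤ R)
    (E : Fin R → ℤ → Type*)
    [∀ r n, AddCommGroup (E r n)] [∀ r n, Module K (E r n)]
    [∀ r n, FiniteDimensional K (E r n)]
    (H : ℤ → Type*)
    [∀ n, AddCommGroup (H n)] [∀ n, Module K (H n)] [∀ n, FiniteDimensional K (H n)]
    (FE : ∀ r n, E r n →ₗ[K] E r n)
    (FH : ∀ n, H n →ₗ[K] H n)
    (d : ∀ r n, E r n →ₗ[K] E r (n + 1))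
    -- each page is nonzero in only finitely many degrees
    (hEbdd : ∀ r : Fin R, {n : ℤ | Nontrivial (E r n)}.Finite)
    -- the abutment is nonzero in only finitely many degrees
    (hHbdd : {n : ℤ | Nontrivial (H n)}.Finite)
    -- the differentials square to zero
    (hdd : ∀ r n, (d r (n + 1)).comp (d r n) = 0)
    -- the differentials commute with `F`
    (hcomm : ∀ r n, (d r n).comp (FE r n) = (FE r (n + 1)).comp (d r n))
    -- each next page is `F`-equivariantly isomorphic to the homology of the previous one
    (hpage : ∀ (r : Fin R) (hr : r.1 + 1 < R) (n : ℤ),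
      ∃ π : ↥(LinearMap.ker (d r (n + 1))) →ₗ[K] E ⟨r.1 + 1, hr⟩ (n + 1),
        Function.Surjective π ∧
        LinearMap.ker π
          = (LinearMap.range (d r n)).comap (LinearMap.ker (d r (n + 1))).subtype ∧
        ∀ (x : E r (n + 1)) (hx : x ∈ LinearMap.ker (d r (n + 1)))
          (hFx : FE r (n + 1) x ∈ LinearMap.ker (d r (n + 1))),
          π ⟨FE r (n + 1) x, hFx⟩ = FE ⟨r.1 + 1, hr⟩ (n + 1) (π ⟨x, hx⟩))
    -- each `H n` has a finite `F`-invariant filtration whose direct sum of successive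
    -- subquotients is `F`-equivariantly isomorphic to the last page `E_R`
    (hfilt : ∀ n : ℤ, ∃ (m : ℕ) (W : Fin (m + 1) → Submodule K (H n)),
      Monotone W ∧ W 0 = ⊥ ∧ W (Fin.last m) = ⊤ ∧
      ∃ hinv : ∀ (j : Fin (m + 1)) (x : H n), x ∈ W j → FH n x ∈ W j,
        ∃ e : (∀ j : Fin m, SubQuot (W j.castSucc) (W j.succ)) ≃ₗ[K] E ⟨R - 1, by omega⟩ n,
          ∀ v, e (fun j => subQuotEnd (FH n) (W j.castSucc) (W j.succ)
                (fun x hx => hinv j.succ x hx) (fun x hx => hinv j.castSucc x hx) (v j))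
            = FE ⟨R - 1, by omega⟩ n (e v))
    (I : ℤ) :
    ‖(∑ᶠ (n : ℤ) (_ : I ≤ n), (-1 : K) ^ n * LinearMap.trace K (E ⟨0, by omega⟩ n) (FE ⟨0, by omega⟩ n))
      - ∑ᶠ (n : ℤ) (_ : I ≤ n), (-1 : K) ^ n * LinearMap.trace K (H n) (FH n)‖
      ≤ L1Trace K (FE ⟨0, by omega⟩ I) := by
  classical
  open STAux in
  -- pointwise commutation
  have hc : ∀ (r : Fin R) (n : ℤ) (x : E r n), d r n (FE r n x) = FE r (n+1) (d r n x) := by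
    intro r n x
    simpa using LinearMap.congr_fun (hcomm r n) x
  have hZinv : ∀ (r : Fin R) (n : ℤ), ∀ x ∈ LinearMap.ker (d r n),
      FE r n x ∈ LinearMap.ker (d r n) := by
    intro r n x hx
    rw [LinearMap.mem_ker] at hx ⊢
    rw [hc, hx, map_zero]
  have hBinv : ∀ (r : Fin R) (n : ℤ), ∀ y ∈ LinearMap.range (d r n),
      FE r (n+1) y ∈ LinearMap.range (d r n) := by
    rintro r n _ ⟨x, rfl⟩
    exact ⟨FE r n x, hc r n x⟩
  have hBZ : ∀ (r : Fin R) (n : ℤ), LinearMap.range (d r n) ≤ LinearMap.ker (d r (n+1)) := by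
    rintro r n _ ⟨x, rfl⟩
    rw [LinearMap.mem_ker]
    simpa using LinearMap.congr_fun (hdd r n) x
  set tE : Fin R → ℤ → K := fun r n => LinearMap.trace K (E r n) (FE r n) with htE
  set tz : Fin R → ℤ → K := fun r n => LinearMap.trace K _ ((FE r n).restrict (hZinv r n))
    with htz
  set tb : Fin R → ℤ → K := fun r n => LinearMap.trace K _ ((FE r (n+1)).restrict (hBinv r n))
    with htb
  set mE : Fin R → ℤ → K → ℕ := fun r n => mult (FE r n) with hmE
  set mz : Fin R → ℤ → K → ℕ := fun r n => mult ((FE r n).restrict (hZinv r n)) with hmz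
  set mb : Fin R → ℤ → K → ℕ := fun r n => mult ((FE r (n+1)).restrict (hBinv r n)) with hmb
  -- Relation 1 : page = cycles + boundaries
  have R1t : ∀ (r : Fin R) (n : ℤ), tE r n = tz r n + tb r n := by
    intro r n
    rw [htE, htz, htb]
    simp only []
    rw [trace_eq_add_of_invariant (FE r n) (LinearMap.ker (d r n)) (hZinv r n)]
    congr 1
    exact trace_quot_ker_eq_range (d r n) (hc r n) (hZinv r n) (hBinv r n)
  have R1m : ∀ (r : Fin R) (n : ℤ) (μ : K), mE r n μ = mz r n μ + mb r n μ := by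
    intro r n μ
    rw [hmE, hmz, hmb]
    simp only []
    rw [mult_eq_add_of_invariant (FE r n) (LinearMap.ker (d r n)) (hZinv r n) μ]
    congr 1
    exact mult_quot_ker_eq_range (d r n) (hc r n) (hZinv r n) (hBinv r n) μ
  -- Relation 2 : cycles = next page + boundaries
  have R2 : ∀ (r : Fin R) (hr : r.1 + 1 < R) (n : ℤ),
      tz r (n+1) = tb r n + tE ⟨r.1+1, hr⟩ (n+1)
        ∧ ∀ μ : K, mz r (n+1) μ = mb r n μ + mE ⟨r.1+1, hr⟩ (n+1) μ := by
    intro r hr n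
    obtain ⟨π, hπs, hπk, hπc⟩ := hpage r hr n
    have hπc' : ∀ x : ↥(LinearMap.ker (d r (n+1))),
        π ((FE r (n+1)).restrict (hZinv r (n+1)) x) = FE ⟨r.1+1, hr⟩ (n+1) (π x) := by
      intro x
      have hx : (x : E r (n+1)) ∈ LinearMap.ker (d r (n+1)) := x.2
      have hFx : FE r (n+1) (x : E r (n+1)) ∈ LinearMap.ker (d r (n+1)) :=
        hZinv r (n+1) _ hx
      have h1 : (FE r (n+1)).restrict (hZinv r (n+1)) x = ⟨FE r (n+1) (x : E r (n+1)), hFx⟩ :=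
        rfl
      rw [h1, hπc (x : E r (n+1)) hx hFx]
    have hkerinv : ∀ x ∈ LinearMap.ker π,
        (FE r (n+1)).restrict (hZinv r (n+1)) x ∈ LinearMap.ker π := by
      intro x hx
      rw [LinearMap.mem_ker] at hx ⊢
      rw [hπc', hx, map_zero]
    have h3t : ∀ (S : Submodule K ↥(LinearMap.ker (d r (n+1))))
        (hS : S = (LinearMap.range (d r n)).comap (LinearMap.ker (d r (n+1))).subtype)
        (hSinv : ∀ x ∈ S, (FE r (n+1)).restrict (hZinv r (n+1)) x ∈ S),
        LinearMap.trace K ↥S (((FE r (n+1)).restrict (hZinv r (n+1))).restrict hSinv) = tb r n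
        ∧ ∀ μ : K, mult (((FE r (n+1)).restrict (hZinv r (n+1))).restrict hSinv) μ = mb r n μ := by
      intro S hS hSinv
      subst hS
      exact ⟨trace_restrict_restrict (hBZ r n) (hZinv r (n+1)) (hBinv r n) hSinv,
        fun μ => mult_restrict_restrict (hBZ r n) (hZinv r (n+1)) (hBinv r n) hSinv μ⟩
    constructor
    · rw [htz]
      simp only []
      rw [trace_eq_add_of_invariant ((FE r (n+1)).restrict (hZinv r (n+1)))
        (LinearMap.ker π) hkerinv,
        (h3t (LinearMap.ker π) hπk (fun x hx => hkerinv x hx)).1,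
        trace_quot_ker_of_surj π hπs hπc' hkerinv]
    · intro μ
      rw [hmz]
      simp only []
      rw [mult_eq_add_of_invariant ((FE r (n+1)).restrict (hZinv r (n+1)))
        (LinearMap.ker π) hkerinv,
        (h3t (LinearMap.ker π) hπk (fun x hx => hkerinv x hx)).2 μ,
        mult_quot_ker_of_surj π hπs hπc' hkerinv μ]
  -- Relation 3 : trace on abutment = trace on last page
  have R3 : ∀ n : ℤ, LinearMap.trace K (H n) (FH n) = tE ⟨R-1, by omega⟩ n := by
    intro n
    obtain ⟨m, Wf, hmono, h0, hlast, hinv, e, he⟩ := hfilt n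
    rw [trace_eq_sum_filtration (FH n) Wf hmono h0 hlast hinv]
    rw [← trace_pi_eq_sum (fun j : Fin m => subQuotEnd (FH n) (Wf j.castSucc) (Wf j.succ)
      (fun x hx => hinv j.succ x hx) (fun x hx => hinv j.castSucc x hx))]
    refine (trace_congr e ?_).symm
    intro v
    have hv : (LinearMap.pi (fun j : Fin m => (subQuotEnd (FH n) (Wf j.castSucc) (Wf j.succ)
        (fun x hx => hinv j.succ x hx) (fun x hx => hinv j.castSucc x hx)).comp
        (LinearMap.proj j))) v
        = fun j => subQuotEnd (FH n) (Wf j.castSucc) (Wf j.succ)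
          (fun x hx => hinv j.succ x hx) (fun x hx => hinv j.castSucc x hx) (v j) := by
      funext j
      simp [LinearMap.pi_apply]
    rw [hv]
    exact he v
  -- bound for degrees
  have hTfin : ((⋃ r : Fin R, {n : ℤ | Nontrivial (E r n)}) ∪ {n : ℤ | Nontrivial (H n)}).Finite :=
    (Set.finite_iUnion hEbdd).union hHbdd
  obtain ⟨N0, hN0⟩ := hTfin.bddAbove
  set N := max I N0 + 1 with hNdef
  have hIle : I ≤ max I N0 := le_max_left _ _
  have hN0le : N0 ≤ max I N0 := le_max_right _ _
  have hIN : I ≤ N := by omega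
  have hEtriv : ∀ (r : Fin R) (n : ℤ), N ≤ n → Subsingleton (E r n) := by
    intro r n hn
    rw [← not_nontrivial_iff_subsingleton]
    intro hnt
    have hmem : n ∈ (⋃ r : Fin R, {n : ℤ | Nontrivial (E r n)}) ∪ {n : ℤ | Nontrivial (H n)} :=
      Set.mem_union_left _ (Set.mem_iUnion.mpr ⟨r, hnt⟩)
    have := hN0 hmem
    omega
  have htE0 : ∀ (r : Fin R) (n : ℤ), N ≤ n → tE r n = 0 := by
    intro r n hn
    haveI := hEtriv r n hn
    rw [htE]
    simp only []
    rw [Subsingleton.elim (FE r n) 0, map_zero]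
  have htb0 : ∀ (r : Fin R) (n : ℤ), N ≤ n + 1 → tb r n = 0 := by
    intro r n hn
    haveI := hEtriv r (n+1) hn
    rw [htb]
    simp only []
    rw [Subsingleton.elim ((FE r (n+1)).restrict (hBinv r n)) 0, map_zero]
  have hne : (-1 : K) ≠ 0 := by norm_num
  -- per-page telescoping sum
  have hpageSum : ∀ (k : ℕ) (hk : k + 1 < R),
      (∑ᶠ (n : ℤ) (_ : I ≤ n), (-1:K)^n * tE ⟨k, by omega⟩ n)
        - (∑ᶠ (n : ℤ) (_ : I ≤ n), (-1:K)^n * tE ⟨k+1, hk⟩ n)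
        = (-1:K)^I * tb ⟨k, by omega⟩ (I-1) := by
    intro k hk
    rw [finsum_Ici_eq_sum_Icc _ I N (fun n hn => by rw [htE0 _ n (by omega), mul_zero]),
      finsum_Ici_eq_sum_Icc _ I N (fun n hn => by rw [htE0 _ n (by omega), mul_zero]),
      ← Finset.sum_sub_distrib]
    have hterm : ∀ n ∈ Finset.Icc I N,
        (-1:K)^n * tE ⟨k, by omega⟩ n - (-1:K)^n * tE ⟨k+1, hk⟩ n
        = (-1:K)^(n-1+1) * tb ⟨k, by omega⟩ (n-1)
          - (-1:K)^(n+1) * tb ⟨k, by omega⟩ n := by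
      intro n _
      have e1 : tE ⟨k, by omega⟩ n = tz ⟨k, by omega⟩ n + tb ⟨k, by omega⟩ n :=
        R1t ⟨k, by omega⟩ n
      have e2 : tz ⟨k, by omega⟩ ((n-1)+1)
          = tb ⟨k, by omega⟩ (n-1) + tE ⟨k+1, hk⟩ ((n-1)+1) :=
        (R2 ⟨k, by omega⟩ hk (n-1)).1
      rw [sub_add_cancel] at e2
      have e3 : (-1:K)^(n-1+1) = (-1:K)^n := by rw [sub_add_cancel]
      rw [e1, e2, e3, zpow_add_one₀ hne n]
      ring
    have htele : ∑ n ∈ Finset.Icc I N, ((-1:K)^(n-1+1) * tb ⟨k, by omega⟩ (n-1)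
          - (-1:K)^(n+1) * tb ⟨k, by omega⟩ n)
        = (-1:K)^(I-1+1) * tb ⟨k, by omega⟩ (I-1) - (-1:K)^(N+1) * tb ⟨k, by omega⟩ N :=
      sum_Icc_telescope (fun x : ℤ => (-1:K)^(x+1) * tb ⟨k, by omega⟩ x) I N hIN
    rw [Finset.sum_congr rfl hterm, htele]
    rw [htb0 _ N (by omega), mul_zero, sub_zero, sub_add_cancel]
  -- boundary multiplicity sums, with junk values
  set mbN : ℕ → K → ℕ := fun s μ => if h : s < R then mb ⟨s, h⟩ (I-1) μ else 0 with hmbN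
  set tbN : ℕ → K := fun s => if h : s < R then tb ⟨s, h⟩ (I-1) else 0 with htbN
  -- telescoped page sums
  have hSr : ∀ (k : ℕ) (hk : k < R),
      (∑ᶠ (n : ℤ) (_ : I ≤ n), (-1:K)^n * tE ⟨0, by omega⟩ n)
        - (∑ᶠ (n : ℤ) (_ : I ≤ n), (-1:K)^n * tE ⟨k, hk⟩ n)
        = (-1:K)^I * ∑ s ∈ Finset.range k, tbN s := by
    intro k
    induction k with
    | zero =>
      intro hk
      simp only [Finset.range_zero, Finset.sum_empty, mul_zero]
      exact sub_self _
    | succ k ih =>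
      intro hk
      have hk' : k < R := by omega
      have hstep := hpageSum k hk
      have hstep' : (∑ᶠ (n : ℤ) (_ : I ≤ n), (-1:K)^n * tE ⟨k, hk'⟩ n)
          - (∑ᶠ (n : ℤ) (_ : I ≤ n), (-1:K)^n * tE ⟨k+1, hk⟩ n)
          = (-1:K)^I * tbN k := by
        rw [htbN]
        simp only [hk', dif_pos]
        exact hstep
      have hihk := ih hk'
      rw [Finset.sum_range_succ, mul_add]
      calc (∑ᶠ (n : ℤ) (_ : I ≤ n), (-1:K)^n * tE ⟨0, by omega⟩ n)
          - (∑ᶠ (n : ℤ) (_ : I ≤ n), (-1:K)^n * tE ⟨k+1, hk⟩ n)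
          = ((∑ᶠ (n : ℤ) (_ : I ≤ n), (-1:K)^n * tE ⟨0, by omega⟩ n)
            - (∑ᶠ (n : ℤ) (_ : I ≤ n), (-1:K)^n * tE ⟨k, hk'⟩ n))
            + ((∑ᶠ (n : ℤ) (_ : I ≤ n), (-1:K)^n * tE ⟨k, hk'⟩ n)
            - (∑ᶠ (n : ℤ) (_ : I ≤ n), (-1:K)^n * tE ⟨k+1, hk⟩ n)) := by ring
        _ = (-1:K)^I * ∑ s ∈ Finset.range k, tbN s + (-1:K)^I * tbN k := by
            rw [hihk, hstep']
  -- multiplicity bound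
  have hmultB : ∀ (k : ℕ) (hk : k < R) (μ : K),
      (∑ s ∈ Finset.range k, mbN s μ) + mE ⟨k, hk⟩ I μ ≤ mE ⟨0, by omega⟩ I μ := by
    intro k
    induction k with
    | zero =>
      intro hk μ
      simp only [Finset.range_zero, Finset.sum_empty, zero_add]
      exact le_refl _
    | succ k ih =>
      intro hk μ
      have hk' : k < R := by omega
      have e2 : mz ⟨k, hk'⟩ ((I-1)+1) μ
          = mb ⟨k, hk'⟩ (I-1) μ + mE ⟨k+1, hk⟩ ((I-1)+1) μ :=
        (R2 ⟨k, hk'⟩ hk (I-1)).2 μ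
      rw [sub_add_cancel] at e2
      have e1 : mE ⟨k, hk'⟩ I μ = mz ⟨k, hk'⟩ I μ + mb ⟨k, hk'⟩ I μ := R1m ⟨k, hk'⟩ I μ
      have hmb_eq : mbN k μ = mb ⟨k, hk'⟩ (I-1) μ := by
        rw [hmbN]; simp only [hk', dif_pos]
      calc (∑ s ∈ Finset.range (k+1), mbN s μ) + mE ⟨k+1, hk⟩ I μ
          = (∑ s ∈ Finset.range k, mbN s μ) + (mbN k μ + mE ⟨k+1, hk⟩ I μ) := by
            rw [Finset.sum_range_succ]; ring
        _ = (∑ s ∈ Finset.range k, mbN s μ) + mz ⟨k, hk'⟩ I μ := by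
            rw [hmb_eq, ← e2]
        _ ≤ (∑ s ∈ Finset.range k, mbN s μ) + mE ⟨k, hk'⟩ I μ := by
            have : mz ⟨k, hk'⟩ I μ ≤ mE ⟨k, hk'⟩ I μ := by omega
            omega
        _ ≤ mE ⟨0, by omega⟩ I μ := ih hk' μ
  -- final assembly
  have hRR : R - 1 < R := by omega
  have hHsum : (∑ᶠ (n : ℤ) (_ : I ≤ n), (-1:K)^n * LinearMap.trace K (H n) (FH n))
      = ∑ᶠ (n : ℤ) (_ : I ≤ n), (-1:K)^n * tE ⟨R-1, by omega⟩ n := by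
    apply finsum_congr
    intro n
    apply finsum_congr
    intro _
    rw [R3 n]
  have hmain : (∑ᶠ (n : ℤ) (_ : I ≤ n), (-1:K)^n * tE ⟨0, by omega⟩ n)
      - (∑ᶠ (n : ℤ) (_ : I ≤ n), (-1:K)^n * LinearMap.trace K (H n) (FH n))
      = (-1:K)^I * ∑ s ∈ Finset.range (R-1), tbN s := by
    rw [hHsum]
    exact hSr (R-1) hRR
  have hgoal_eq : ‖(∑ᶠ (n : ℤ) (_ : I ≤ n), (-1:K)^n * tE ⟨0, by omega⟩ n)
      - (∑ᶠ (n : ℤ) (_ : I ≤ n), (-1:K)^n * LinearMap.trace K (H n) (FH n))‖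
      = ‖∑ s ∈ Finset.range (R-1), tbN s‖ := by
    rw [hmain, norm_mul, norm_zpow, norm_neg, norm_one, one_zpow, one_mul]
  -- L1 bound
  have hL1 : ‖∑ s ∈ Finset.range (R-1), tbN s‖
      ≤ ∑ᶠ μ : K, (mE ⟨0, by omega⟩ I μ : ℝ) * ‖μ‖ := by
    refine (norm_sum_le _ _).trans ?_
    have hstep1 : ∀ s ∈ Finset.range (R-1),
        ‖tbN s‖ ≤ ∑ᶠ μ : K, (mbN s μ : ℝ) * ‖μ‖ := by
      intro s hs
      have hsR : s < R := by
        have := Finset.mem_range.mp hs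
        omega
      have h1 : tbN s = tb ⟨s, hsR⟩ (I-1) := by rw [htbN]; simp only [hsR, dif_pos]
      have h2 : ∀ μ : K, mbN s μ = mb ⟨s, hsR⟩ (I-1) μ := by
        intro μ; rw [hmbN]; simp only [hsR, dif_pos]
      rw [h1, htb]
      simp only []
      refine (norm_trace_le_L1 ((FE ⟨s, hsR⟩ ((I-1)+1)).restrict (hBinv ⟨s, hsR⟩ (I-1)))).trans
        (le_of_eq ?_)
      apply finsum_congr
      intro μ
      simp only [h2 μ, hmb]
    -- support finiteness for the boundary multiplicity functions
    have hsupp_mb : ∀ s : ℕ, (Function.support (fun μ : K => (mbN s μ : ℝ) * ‖μ‖)).Finite := by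
      intro s
      by_cases hsR : s < R
      · apply Set.Finite.subset (mult_support_finite
          ((FE ⟨s, hsR⟩ ((I-1)+1)).restrict (hBinv ⟨s, hsR⟩ (I-1))))
        intro μ hμ
        simp only [Function.mem_support] at hμ ⊢
        intro h0
        apply hμ
        have : mbN s μ = 0 := by
          rw [hmbN]; simp only [hsR, dif_pos]
          rw [hmb]; exact h0
        rw [this]
        simp
      · have hzero : (fun μ : K => (mbN s μ : ℝ) * ‖μ‖) = fun _ => 0 := by
          funext μ
          rw [hmbN]
          simp [hsR]
        rw [hzero]
        simp
    calc ∑ s ∈ Finset.range (R-1), ‖tbN s‖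
        ≤ ∑ s ∈ Finset.range (R-1), ∑ᶠ μ : K, (mbN s μ : ℝ) * ‖μ‖ :=
          Finset.sum_le_sum hstep1
      _ = ∑ᶠ μ : K, ∑ s ∈ Finset.range (R-1), (mbN s μ : ℝ) * ‖μ‖ :=
          (finsum_sum_comm (Finset.range (R-1)) (fun μ s => (mbN s μ : ℝ) * ‖μ‖)
            (fun s _ => hsupp_mb s)).symm
      _ ≤ ∑ᶠ μ : K, (mE ⟨0, by omega⟩ I μ : ℝ) * ‖μ‖ := by
          set f : K → ℝ := fun μ => ∑ s ∈ Finset.range (R-1), (mbN s μ : ℝ) * ‖μ‖ with hfdef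
          set g : K → ℝ := fun μ => (mE ⟨0, by omega⟩ I μ : ℝ) * ‖μ‖ with hgdef
          have hfle : ∀ μ, f μ ≤ g μ := by
            intro μ
            rw [hfdef, hgdef]
            simp only []
            rw [← Finset.sum_mul, ← Nat.cast_sum]
            apply mul_le_mul_of_nonneg_right _ (norm_nonneg μ)
            have := hmultB (R-1) hRR μ
            exact_mod_cast le_trans (Nat.le_add_right _ _) this
          have hf : (Function.support f).Finite := by
            apply Set.Finite.subset (Set.Finite.biUnion (Finset.range (R-1)).finite_toSet
              (fun s _ => hsupp_mb s))
            intro μ hμ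
            simp only [Function.mem_support, hfdef] at hμ
            by_contra hnot
            apply hμ
            apply Finset.sum_eq_zero
            intro s hs
            simp only [Set.mem_iUnion, Function.mem_support] at hnot
            by_contra hterm0
            exact hnot ⟨s, hs, hterm0⟩
          have hg : (Function.support g).Finite := by
            apply Set.Finite.subset (mult_support_finite (FE ⟨0, by omega⟩ I))
            intro μ hμ
            simp only [Function.mem_support, hgdef] at hμ ⊢
            intro h0
            apply hμ
            have : mE ⟨0, by omega⟩ I μ = 0 := by rw [hmE]; exact h0
            rw [this]
            simp
          set u : Finset K := hf.toFinset ∪ hg.toFinset with hu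
          rw [finsum_eq_sum_of_support_subset f (s := u)
              (by intro μ hμ; rw [hu]; simp only [Finset.coe_union, Set.mem_union,
                    hf.coe_toFinset, hg.coe_toFinset]; exact Or.inl hμ),
            finsum_eq_sum_of_support_subset g (s := u)
              (by intro μ hμ; rw [hu]; simp only [Finset.coe_union, Set.mem_union,
                    hf.coe_toFinset, hg.coe_toFinset]; exact Or.inr hμ)]
          exact Finset.sum_le_sum (fun μ _ => hfle μ)
  -- conclude
  have hfinal : L1Trace K (FE ⟨0, by omega⟩ I) = ∑ᶠ μ : K, (mE ⟨0, by omega⟩ I μ : ℝ) * ‖μ‖ := by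
    rw [hmE]
    rfl
  have hend : ‖(∑ᶠ (n : ℤ) (_ : I ≤ n), (-1:K)^n * tE ⟨0, by omega⟩ n)
      - (∑ᶠ (n : ℤ) (_ : I ≤ n), (-1:K)^n * LinearMap.trace K (H n) (FH n))‖
      ≤ L1Trace K (FE ⟨0, by omega⟩ I) := by
    rw [hgoal_eq, hfinal]
    exact hL1
  simpa only [htE] using hend
end

section
/- Let K be an algebraically closed field equipped with a norm (a normed field). Let W be an ℕ²-bigraded K-vector space with an endomorphism F compatible with the grading. Suppose that W_{0,i} = 0 and W_{n,0} = 0 for all n, i ∈ ℕ, and that there are positive real constants E, d, b with E ≥ 1 such that |F, W_{n,i}| ≤ E·dⁿ·bⁱ for all (n,i). Then the bigraded pieces of the tensor algebra T(W), namely T(W)_{n,i} = ⊕_{r ≥ 0} ⊕ W_{n₁,i₁} ⊗_K ⋯ ⊗_K W_{n_r,i_r} (the inner sum over all r-tuples ((n₁,i₁),…,(n_r,i_r)) ∈ (ℕ×ℕ)^r with (n₁,i₁)+⋯+(n_r,i_r) = (n,i)), equipped with the endomorphism acting as F ⊗ ⋯ ⊗ F on each summand, satisfy |F, T(W)_{n,i}|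 ≤ (2Ed)ⁿ·(2b)ⁱ for all (n,i) ∈ ℕ×ℕ. -/
open scoped TensorProduct DirectSum

/-! ### Generic lemmas about `L1Trace` -/

open Module

section Basic
variable {K : Type*} [NormedField K] {V : Type*} [AddCommGroup V] [Module K V]

lemma L1Trace_nonneg (F : V →ₗ[K] V) : 0 ≤ L1Trace K F :=
  finsum_nonneg fun μ => mul_nonneg (by positivity) (norm_nonneg _)

lemma L1Trace_eq_sum [FiniteDimensional K V] (F : V →ₗ[K] V) {s : Finset K}
    (hs : ∀ μ : K, Module.End.maxGenEigenspace F μ ≠ ⊥ → μ ∈ s) :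
    L1Trace K F = ∑ μ ∈ s, (finrank K ↥(Module.End.maxGenEigenspace F μ) : ℝ) * ‖μ‖ := by
  apply finsum_eq_finset_sum_of_support_subset
  intro μ hμ
  apply hs
  intro h
  rw [Function.mem_support] at hμ
  simp [h, finrank_bot] at hμ

lemma L1Trace_id_field : L1Trace K (LinearMap.id : K →ₗ[K] K) = 1 := by
  have hbot : ∀ μ : K, μ ≠ 1 →
      Module.End.maxGenEigenspace (LinearMap.id : K →ₗ[K] K) μ = ⊥ := by
    intro μ hμ
    rw [eq_bot_iff]
    intro x hx
    rw [Module.End.mem_maxGenEigenspace] at hx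
    obtain ⟨k, hk⟩ := hx
    have hid : (LinearMap.id : K →ₗ[K] K) - μ • (1 : Module.End K K)
        = (1 - μ) • (1 : Module.End K K) := by
      ext y; simp [sub_smul]
    rw [hid, smul_pow] at hk
    simp only [LinearMap.smul_apply, Module.End.one_apply] at hk
    have h1 : (1 - μ) ^ k ≠ 0 := pow_ne_zero _ (sub_ne_zero.2 (Ne.symm hμ))
    rcases smul_eq_zero.1 hk with h | h
    · exact absurd h h1
    · simpa using h
  have htop : Module.End.maxGenEigenspace (LinearMap.id : K →ₗ[K] K) 1 = ⊤ := by
    rw [eq_top_iff]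
    intro x _
    rw [Module.End.mem_maxGenEigenspace]
    exact ⟨1, by simp⟩
  rw [L1Trace, finsum_eq_single _ (1 : K)
    (fun μ hμ => by rw [hbot μ hμ]; simp [finrank_bot])]
  rw [htop, finrank_top, finrank_self, norm_one]
  simp

end Basic

section Conj
variable {K : Type*} [NormedField K] {V V' : Type*} [AddCommGroup V] [Module K V]
  [AddCommGroup V'] [Module K V']

lemma conj_pow_apply (e : V ≃ₗ[K] V') (G : V →ₗ[K] V) (μ : K) (k : ℕ) (x : V') :
    ((e.conj G - μ • (1 : Module.End K V')) ^ k) x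
      = e (((G - μ • (1 : Module.End K V)) ^ k) (e.symm x)) := by
  induction k generalizing x with
  | zero => simp
  | succ k ih =>
      have hstep : ∀ y : V', (e.conj G - μ • (1 : Module.End K V')) y
          = e ((G - μ • (1 : Module.End K V)) (e.symm y)) := by
        intro y
        simp [LinearEquiv.conj_apply, map_smul]
      rw [pow_succ', pow_succ']
      simp only [Module.End.mul_apply, hstep, ih, LinearEquiv.symm_apply_apply]

lemma maxGenEigenspace_conj (e : V ≃ₗ[K] V') (G : V →ₗ[K] V) (μ : K) :
    Module.End.maxGenEigenspace (e.conj G) μ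
      = (Module.End.maxGenEigenspace G μ).map (e : V →ₗ[K] V') := by
  ext x
  rw [Submodule.mem_map_equiv]
  simp only [Module.End.mem_maxGenEigenspace, conj_pow_apply, EmbeddingLike.map_eq_zero_iff]

lemma L1Trace_conj (e : V ≃ₗ[K] V') (G : V →ₗ[K] V) :
    L1Trace K (e.conj G) = L1Trace K G := by
  unfold L1Trace
  apply finsum_congr; intro μ
  rw [maxGenEigenspace_conj, LinearEquiv.finrank_map_eq]

end Conj

section Pi
variable {K : Type*} [NormedField K] {ι : Type*} {V : ι → Type*}
  [∀ i, AddCommGroup (V i)] [∀ i, Module K (V i)]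

/-- The endomorphism of a product acting componentwise. -/
noncomputable def piEnd (F : ∀ i, V i →ₗ[K] V i) : (∀ i, V i) →ₗ[K] (∀ i, V i) :=
  LinearMap.pi fun i => (F i).comp (LinearMap.proj i)

@[simp] lemma piEnd_apply (F : ∀ i, V i →ₗ[K] V i) (x : ∀ i, V i) (i : ι) :
    piEnd F x i = F i (x i) := rfl

lemma piEnd_sub_pow_apply (F : ∀ i, V i →ₗ[K] V i) (μ : K) (k : ℕ) (x : ∀ i, V i) (i : ι) :
    (((piEnd F) - μ • (1 : Module.End K (∀ i, V i))) ^ k) x i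
      = ((F i - μ • (1 : Module.End K (V i))) ^ k) (x i) := by
  induction k generalizing x with
  | zero => simp
  | succ k ih =>
      rw [pow_succ', pow_succ', Module.End.mul_apply, Module.End.mul_apply]
      have hstep : ∀ y : ∀ i, V i, ((piEnd F - μ • (1 : Module.End K (∀ i, V i))) y) i
          = (F i - μ • (1 : Module.End K (V i))) (y i) := fun y => by
        simp [piEnd, LinearMap.sub_apply, LinearMap.smul_apply]
      rw [hstep, ih]

lemma mem_maxGenEigenspace_piEnd [Fintype ι] [∀ i, FiniteDimensional K (V i)]
    (F : ∀ i, V i →ₗ[K] V i) (μ : K) (x : ∀ i, V i) :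
    x ∈ Module.End.maxGenEigenspace (piEnd F) μ
      ↔ ∀ i, x i ∈ Module.End.maxGenEigenspace (F i) μ := by
  simp only [Module.End.mem_maxGenEigenspace]
  constructor
  · rintro ⟨k, hk⟩ i
    exact ⟨k, by rw [← piEnd_sub_pow_apply, hk]; rfl⟩
  · intro h
    choose k hk using h
    classical
    refine ⟨Finset.univ.sup k, ?_⟩
    funext i
    rw [piEnd_sub_pow_apply]
    have : ((F i - μ • (1 : Module.End K (V i))) ^ Finset.univ.sup k) (x i) = 0 := by
      obtain ⟨m, hm⟩ : ∃ m, Finset.univ.sup k = m + k i :=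
        ⟨Finset.univ.sup k - k i, by
          have := Finset.le_sup (f := k) (Finset.mem_univ i); omega⟩
      rw [hm, pow_add, Module.End.mul_apply, hk, map_zero]
    exact this

/-- The generalized eigenspace of `piEnd F` is the product of generalized eigenspaces. -/
noncomputable def maxGenEigenspacePiEquiv [Fintype ι] [∀ i, FiniteDimensional K (V i)]
    (F : ∀ i, V i →ₗ[K] V i) (μ : K) :
    ↥(Module.End.maxGenEigenspace (piEnd F) μ) ≃ₗ[K]
      ∀ i, ↥(Module.End.maxGenEigenspace (F i) μ) where
  toFun x i := ⟨x.1 i, (mem_maxGenEigenspace_piEnd F μ x.1).1 x.2 i⟩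
  map_add' _ _ := rfl
  map_smul' _ _ := rfl
  invFun f := ⟨fun i => (f i).1, (mem_maxGenEigenspace_piEnd F μ _).2 fun i => (f i).2⟩
  left_inv _ := rfl
  right_inv _ := rfl

lemma finrank_maxGenEigenspace_piEnd [Fintype ι] [∀ i, FiniteDimensional K (V i)]
    (F : ∀ i, V i →ₗ[K] V i) (μ : K) :
    finrank K ↥(Module.End.maxGenEigenspace (piEnd F) μ)
      = ∑ i, finrank K ↥(Module.End.maxGenEigenspace (F i) μ) := by
  rw [(maxGenEigenspacePiEquiv F μ).finrank_eq, Module.finrank_pi_fintype]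

lemma L1Trace_piEnd [Fintype ι] [∀ i, FiniteDimensional K (V i)]
    (F : ∀ i, V i →ₗ[K] V i) :
    L1Trace K (piEnd F) = ∑ i, L1Trace K (F i) := by
  classical
  set s : Finset K := Finset.univ.biUnion
    (fun i : ι => (Module.End.finite_hasEigenvalue (f := F i)).toFinset) with hs
  have hmem : ∀ (i : ι) (μ : K), Module.End.maxGenEigenspace (F i) μ ≠ ⊥ → μ ∈ s := by
    intro i μ hμ
    apply Finset.mem_biUnion.2 ⟨i, Finset.mem_univ i, ?_⟩
    rw [Set.Finite.mem_toFinset]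
    exact (Module.End.HasUnifEigenvalue.lt zero_lt_one hμ : _)
  have h1 : L1Trace K (piEnd F) = ∑ μ ∈ s,
      (finrank K ↥(Module.End.maxGenEigenspace (piEnd F) μ) : ℝ) * ‖μ‖ := by
    apply L1Trace_eq_sum
    intro μ hμ
    by_contra hμs
    apply hμ
    have hall : ∀ i, Module.End.maxGenEigenspace (F i) μ = ⊥ := by
      intro i
      by_contra h
      exact hμs (hmem i μ h)
    rw [eq_bot_iff]
    intro x hx
    have hmem' := (mem_maxGenEigenspace_piEnd F μ x).1 hx
    have hx0 : x = 0 := by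
      funext i
      have := hmem' i
      rw [hall i] at this
      simpa using this
    simp [hx0]
  rw [h1]
  have h2 : ∀ i, L1Trace K (F i) = ∑ μ ∈ s,
      (finrank K ↥(Module.End.maxGenEigenspace (F i) μ) : ℝ) * ‖μ‖ :=
    fun i => L1Trace_eq_sum (F i) (hmem i)
  simp only [h2, finrank_maxGenEigenspace_piEnd]
  rw [Finset.sum_comm]
  congr 1
  funext μ
  push_cast
  rw [Finset.sum_mul]

end Pi

section DFin
variable {K : Type*} [NormedField K] {ι : Type*} [DecidableEq ι] {V : ι → Type*}
  [∀ i, AddCommGroup (V i)] [∀ i, Module K (V i)]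

/-- If all components outside a finite set are trivial, a `DFinsupp` module is equivalent
to the finite product. -/
noncomputable def dfinsuppEquivPi (s : Finset ι) (hs : ∀ i ∉ s, Subsingleton (V i)) :
    (Π₀ i, V i) ≃ₗ[K] ∀ i : s, V i where
  toFun x i := x i.1
  map_add' x y := by funext i; simp
  map_smul' c x := by funext i; simp
  invFun f := DFinsupp.mk s fun i => f i
  left_inv x := by
    ext i
    by_cases h : i ∈ s
    · simp [DFinsupp.mk_apply, h]
    · rw [DFinsupp.mk_apply, dif_neg h]
      exact (hs i h).elim _ _
  right_inv f := by
    funext i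
    obtain ⟨iv, hi⟩ := i
    show (DFinsupp.mk s fun j => f j) iv = f ⟨iv, hi⟩
    rw [DFinsupp.mk_apply, dif_pos hi]

lemma conj_mapRange (F : ∀ i, V i →ₗ[K] V i) (s : Finset ι)
    (hs : ∀ i ∉ s, Subsingleton (V i)) :
    (dfinsuppEquivPi (K := K) s hs).conj
        (DFinsupp.mapRange.linearMap F) = piEnd (fun i : s => F i.1) := by
  apply LinearMap.ext
  intro f
  funext i
  show (dfinsuppEquivPi (K := K) s hs)
      ((DFinsupp.mapRange.linearMap F) ((dfinsuppEquivPi (K := K) s hs).symm f)) i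
    = F i.1 (f i)
  have h1 : ((dfinsuppEquivPi (K := K) s hs).symm f : Π₀ i, V i)
      = DFinsupp.mk s fun j => f j := rfl
  have h2 : ∀ x : Π₀ i, V i, (dfinsuppEquivPi (K := K) s hs) x i = x i.1 := fun _ => rfl
  obtain ⟨iv, hi⟩ := i
  rw [h2, h1, DFinsupp.mapRange.linearMap_apply, DFinsupp.mapRange_apply, DFinsupp.mk_apply,
    dif_pos hi]

lemma L1Trace_dfinsupp [∀ i, FiniteDimensional K (V i)] (F : ∀ i, V i →ₗ[K] V i)
    (s : Finset ι) (hs : ∀ i ∉ s, Subsingleton (V i)) :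
    L1Trace K (DFinsupp.mapRange.linearMap F) = ∑ i ∈ s, L1Trace K (F i) := by
  rw [← L1Trace_conj (dfinsuppEquivPi (K := K) s hs) (DFinsupp.mapRange.linearMap F),
    conj_mapRange, L1Trace_piEnd]
  exact Finset.sum_coe_sort s fun i => L1Trace K (F i)

end DFin

section FinsetSup
variable {K : Type*} [DivisionRing K] {V : Type*} [AddCommGroup V] [Module K V]
  [FiniteDimensional K V]

lemma finrank_finsetSup_le {ι : Type*} (s : Finset ι) (p : ι → Submodule K V) :
    finrank K ↥(s.sup p) ≤ ∑ i ∈ s, finrank K ↥(p i) := by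
  classical
  induction s using Finset.induction with
  | empty => simp [finrank_bot]
  | insert a s' h ih =>
      rw [Finset.sup_insert, Finset.sum_insert h]
      exact le_trans (Submodule.finrank_add_le_finrank_add_finrank _ _) (by omega)
end FinsetSup

section Tensor
variable {K : Type*} [NormedField K]
  {V V' : Type*} [AddCommGroup V] [Module K V] [AddCommGroup V'] [Module K V']

open TensorProduct

lemma tensor_sub_smul_decomp (F : V →ₗ[K] V) (G : V' →ₗ[K] V') (l m : K) :
    TensorProduct.map F G - (l * m) • (1 : Module.End K (V ⊗[K] V'))
      = TensorProduct.map (F - l • (1 : Module.End K V)) G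
        + l • TensorProduct.map (1 : Module.End K V) (G - m • (1 : Module.End K V')) := by
  apply TensorProduct.ext'
  intro v w
  simp only [LinearMap.sub_apply, LinearMap.add_apply, LinearMap.smul_apply,
    TensorProduct.map_tmul, Module.End.one_apply, sub_tmul, tmul_sub, smul_tmul', smul_sub,
    mul_smul, smul_tmul]
  abel

lemma commute_tensor_aux (F : V →ₗ[K] V) (G : V' →ₗ[K] V') (l m : K) :
    Commute (TensorProduct.map (F - l • (1 : Module.End K V)) G)
      (l • TensorProduct.map (1 : Module.End K V) (G - m • (1 : Module.End K V'))) := by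
  have h : Commute (TensorProduct.map (F - l • (1 : Module.End K V)) G)
      (TensorProduct.map (1 : Module.End K V) (G - m • (1 : Module.End K V'))) := by
    unfold Commute SemiconjBy
    rw [← TensorProduct.map_mul, ← TensorProduct.map_mul, mul_one, one_mul]
    congr 1
    exact ((Commute.refl G).sub_right ((Commute.one_right G).smul_right m)).eq
  exact h.smul_right l

lemma tmul_mem_maxGenEigenspace (F : V →ₗ[K] V) (G : V' →ₗ[K] V') {l m : K} {v : V} {w : V'}
    (hv : v ∈ Module.End.maxGenEigenspace F l) (hw : w ∈ Module.End.maxGenEigenspace G m) :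
    v ⊗ₜ[K] w ∈ Module.End.maxGenEigenspace (TensorProduct.map F G) (l * m) := by
  rw [Module.End.mem_maxGenEigenspace] at hv hw ⊢
  obtain ⟨a, ha⟩ := hv
  obtain ⟨b, hb⟩ := hw
  refine ⟨a + b, ?_⟩
  rw [tensor_sub_smul_decomp, (commute_tensor_aux F G l m).add_pow, LinearMap.sum_apply]
  apply Finset.sum_eq_zero
  intro j hj
  rw [Module.End.mul_apply, Module.End.mul_apply, Module.End.natCast_apply, map_nsmul, map_nsmul]
  have hY : ((l • TensorProduct.map (1 : Module.End K V)
        (G - m • (1 : Module.End K V'))) ^ (a + b - j)) (v ⊗ₜ[K] w)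
      = l ^ (a + b - j) • (v ⊗ₜ[K] (((G - m • (1 : Module.End K V')) ^ (a + b - j)) w)) := by
    rw [smul_pow, LinearMap.smul_apply, TensorProduct.map_pow, one_pow, TensorProduct.map_tmul,
      Module.End.one_apply]
  rw [hY, map_smul, TensorProduct.map_pow, TensorProduct.map_tmul]
  by_cases hja : a ≤ j
  · have : ((F - l • (1 : Module.End K V)) ^ j) v = 0 := by
      obtain ⟨c, rfl⟩ : ∃ c, j = c + a := ⟨j - a, by omega⟩
      rw [pow_add, Module.End.mul_apply, ha, map_zero]
    rw [this, zero_tmul, smul_zero, smul_zero]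
  · have : ((G - m • (1 : Module.End K V')) ^ (a + b - j)) w = 0 := by
      obtain ⟨c, hc⟩ : ∃ c, a + b - j = c + b := ⟨a - j, by omega⟩
      rw [hc, pow_add, Module.End.mul_apply, hb, map_zero]
    rw [this, map_zero, tmul_zero, smul_zero, smul_zero]

variable [FiniteDimensional K V] [FiniteDimensional K V']

/-- The image of a tensor product of generalized eigenspaces inside `V ⊗ V'`. -/
noncomputable def eigTensor (F : V →ₗ[K] V) (G : V' →ₗ[K] V') (p : K × K) :
    Submodule K (V ⊗[K] V') :=
  LinearMap.range (TensorProduct.map (Module.End.maxGenEigenspace F p.1).subtype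
    (Module.End.maxGenEigenspace G p.2).subtype)

omit [FiniteDimensional K V] [FiniteDimensional K V'] in
lemma eigTensor_le_maxGenEigenspace (F : V →ₗ[K] V) (G : V' →ₗ[K] V') (p : K × K) :
    eigTensor F G p ≤ Module.End.maxGenEigenspace (TensorProduct.map F G) (p.1 * p.2) := by
  rintro x ⟨z, rfl⟩
  induction z using TensorProduct.induction_on with
  | zero => simp only [map_zero]; exact Submodule.zero_mem _
  | tmul v w =>
      rw [TensorProduct.map_tmul]
      exact tmul_mem_maxGenEigenspace F G v.2 w.2
  | add x y hx hy =>
      rw [map_add]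
      exact Submodule.add_mem _ hx hy

omit [FiniteDimensional K V] [FiniteDimensional K V'] in
lemma eigTensor_eq_bot_left (F : V →ₗ[K] V) (G : V' →ₗ[K] V') (p : K × K)
    (h : Module.End.maxGenEigenspace F p.1 = ⊥) : eigTensor F G p = ⊥ := by
  rw [eq_bot_iff]
  rintro x ⟨z, rfl⟩
  haveI : Subsingleton ↥(Module.End.maxGenEigenspace F p.1) := by rw [h]; infer_instance
  have : z = 0 := Subsingleton.elim z 0
  simp [this]

omit [FiniteDimensional K V] [FiniteDimensional K V'] in
lemma eigTensor_eq_bot_right (F : V →ₗ[K] V) (G : V' →ₗ[K] V') (p : K × K)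
    (h : Module.End.maxGenEigenspace G p.2 = ⊥) : eigTensor F G p = ⊥ := by
  rw [eq_bot_iff]
  rintro x ⟨z, rfl⟩
  haveI : Subsingleton ↥(Module.End.maxGenEigenspace G p.2) := by rw [h]; infer_instance
  have : z = 0 := Subsingleton.elim z 0
  simp [this]

lemma finrank_eigTensor_le (F : V →ₗ[K] V) (G : V' →ₗ[K] V') (p : K × K) :
    finrank K ↥(eigTensor F G p) ≤ finrank K ↥(Module.End.maxGenEigenspace F p.1)
      * finrank K ↥(Module.End.maxGenEigenspace G p.2) := by
  refine le_trans (LinearMap.finrank_range_le _) ?_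
  rw [finrank_tensorProduct]

lemma iSup_eigTensor_eq_top [IsAlgClosed K] (F : V →ₗ[K] V) (G : V' →ₗ[K] V') :
    ⨆ p : K × K, eigTensor F G p = ⊤ := by
  rw [eq_top_iff, ← TensorProduct.span_tmul_eq_top K V V', Submodule.span_le]
  rintro _ ⟨v, w, rfl⟩
  have step1 : ∀ (m : K) (w' : V'), w' ∈ Module.End.maxGenEigenspace G m → ∀ v' : V,
      v' ⊗ₜ[K] w' ∈ ⨆ p : K × K, eigTensor F G p := by
    intro m w' hw v'
    have hv' : v' ∈ ⨆ l, Module.End.maxGenEigenspace F l := by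
      rw [Module.End.iSup_maxGenEigenspace_eq_top]; trivial
    have hle : (⨆ l, Module.End.maxGenEigenspace F l)
        ≤ Submodule.comap ((TensorProduct.mk K V V').flip w')
          (⨆ p : K × K, eigTensor F G p) := by
      apply iSup_le
      intro l v'' hv''
      rw [Submodule.mem_comap]
      refine le_iSup (fun p : K × K => eigTensor F G p) (l, m) ?_
      exact ⟨(⟨v'', hv''⟩ : ↥(Module.End.maxGenEigenspace F l)) ⊗ₜ[K]
        (⟨w', hw⟩ : ↥(Module.End.maxGenEigenspace G m)), by
          simp [TensorProduct.map_tmul, TensorProduct.mk_apply]⟩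
    exact hle hv'
  have hw' : w ∈ ⨆ m, Module.End.maxGenEigenspace G m := by
    rw [Module.End.iSup_maxGenEigenspace_eq_top]; trivial
  have hle : (⨆ m, Module.End.maxGenEigenspace G m)
      ≤ Submodule.comap (TensorProduct.mk K V V' v) (⨆ p : K × K, eigTensor F G p) := by
    apply iSup_le
    intro m w'' hw''
    rw [Submodule.mem_comap]
    exact step1 m w'' hw'' v
  exact hle hw'

lemma L1Trace_tensor_le [IsAlgClosed K] (F : V →ₗ[K] V) (G : V' →ₗ[K] V') :
    L1Trace K (TensorProduct.map F G) ≤ L1Trace K F * L1Trace K G := by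
  classical
  set S : Finset K := (Module.End.finite_hasEigenvalue (f := F)).toFinset with hS
  set S' : Finset K := (Module.End.finite_hasEigenvalue (f := G)).toFinset with hS'
  have hSb : ∀ l : K, l ∉ S → Module.End.maxGenEigenspace F l = ⊥ := by
    intro l hl
    by_contra h
    exact hl (Set.Finite.mem_toFinset _ |>.2 (Module.End.HasUnifEigenvalue.lt zero_lt_one h))
  have hS'b : ∀ m : K, m ∉ S' → Module.End.maxGenEigenspace G m = ⊥ := by
    intro m hm
    by_contra h
    exact hm (Set.Finite.mem_toFinset _ |>.2 (Module.End.HasUnifEigenvalue.lt zero_lt_one h))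
  set A := TensorProduct.map F G with hA
  set Q : K → Submodule K (V ⊗[K] V') := fun ν =>
    ((S ×ˢ S').filter (fun p => p.1 * p.2 = ν)).sup (eigTensor F G) with hQ
  have hQT : ∀ ν, Q ν ≤ Module.End.maxGenEigenspace A ν := by
    intro ν
    apply Finset.sup_le
    intro p hp
    rw [Finset.mem_filter] at hp
    rw [← hp.2]
    exact eigTensor_le_maxGenEigenspace F G p
  have hTQ : ∀ ν, Module.End.maxGenEigenspace A ν = Q ν := by
    intro ν
    set R : Submodule K (V ⊗[K] V') := ⨆ ν', ⨆ _ : ν' ≠ ν, Module.End.maxGenEigenspace A ν'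
      with hR
    have hQR : R ⊔ Q ν = ⊤ := by
      rw [eq_top_iff, ← iSup_eigTensor_eq_top F G]
      apply iSup_le
      intro p
      by_cases hp1 : p ∈ S ×ˢ S'
      · by_cases hp2 : p.1 * p.2 = ν
        · exact le_sup_of_le_right (Finset.le_sup (Finset.mem_filter.2 ⟨hp1, hp2⟩))
        · refine le_sup_of_le_left ?_
          refine le_trans (eigTensor_le_maxGenEigenspace F G p) ?_
          exact le_iSup_of_le (p.1 * p.2) (le_iSup_of_le hp2 le_rfl)
      · rw [Finset.mem_product, not_and_or] at hp1
        rcases hp1 with h1 | h1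
        · rw [eigTensor_eq_bot_left F G p (hSb _ h1)]; exact bot_le
        · rw [eigTensor_eq_bot_right F G p (hS'b _ h1)]; exact bot_le
    have hdisj : Module.End.maxGenEigenspace A ν ⊓ R = ⊥ :=
      disjoint_iff.1 (Module.End.independent_maxGenEigenspace A ν)
    calc Module.End.maxGenEigenspace A ν
        = Module.End.maxGenEigenspace A ν ⊓ (R ⊔ Q ν) := by rw [hQR, inf_top_eq]
      _ = Module.End.maxGenEigenspace A ν ⊓ R ⊔ Q ν := (inf_sup_assoc_of_le R (hQT ν)).symm
      _ = Q ν := by rw [hdisj, bot_sup_eq]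
  set T : Finset K := (S ×ˢ S').image (fun p => p.1 * p.2) with hT
  have h1 : L1Trace K A = ∑ ν ∈ T,
      (finrank K ↥(Module.End.maxGenEigenspace A ν) : ℝ) * ‖ν‖ := by
    apply L1Trace_eq_sum
    intro ν hν
    by_contra hνT
    apply hν
    rw [hTQ ν, hQ]
    convert Finset.sup_empty
    rw [Finset.eq_empty_iff_forall_notMem]
    intro p hp
    rw [Finset.mem_filter] at hp
    exact hνT (Finset.mem_image.2 ⟨p, hp.1, hp.2⟩)
  rw [h1]
  have h2 : ∀ ν ∈ T, (finrank K ↥(Module.End.maxGenEigenspace A ν) : ℝ) * ‖ν‖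
      ≤ ∑ p ∈ (S ×ˢ S').filter (fun p => p.1 * p.2 = ν),
          ((finrank K ↥(Module.End.maxGenEigenspace F p.1)
            * finrank K ↥(Module.End.maxGenEigenspace G p.2) : ℕ) : ℝ) * (‖p.1‖ * ‖p.2‖) := by
    intro ν _
    have hdim : finrank K ↥(Module.End.maxGenEigenspace A ν)
        ≤ ∑ p ∈ (S ×ˢ S').filter (fun p => p.1 * p.2 = ν),
            finrank K ↥(Module.End.maxGenEigenspace F p.1)
              * finrank K ↥(Module.End.maxGenEigenspace G p.2) := by
      rw [hTQ ν]
      refine le_trans (finrank_finsetSup_le _ _) ?_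
      exact Finset.sum_le_sum fun p _ => finrank_eigTensor_le F G p
    calc (finrank K ↥(Module.End.maxGenEigenspace A ν) : ℝ) * ‖ν‖
        ≤ ((∑ p ∈ (S ×ˢ S').filter (fun p => p.1 * p.2 = ν),
            finrank K ↥(Module.End.maxGenEigenspace F p.1)
              * finrank K ↥(Module.End.maxGenEigenspace G p.2) : ℕ) : ℝ) * ‖ν‖ := by
          apply mul_le_mul_of_nonneg_right _ (norm_nonneg _)
          exact_mod_cast hdim
      _ = ∑ p ∈ (S ×ˢ S').filter (fun p => p.1 * p.2 = ν),
            ((finrank K ↥(Module.End.maxGenEigenspace F p.1)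
              * finrank K ↥(Module.End.maxGenEigenspace G p.2) : ℕ) : ℝ) * ‖ν‖ := by
          push_cast
          rw [Finset.sum_mul]
      _ = _ := by
          apply Finset.sum_congr rfl
          intro p hp
          rw [Finset.mem_filter] at hp
          rw [← hp.2, norm_mul]
  refine le_trans (Finset.sum_le_sum h2) (le_of_eq ?_)
  have h4 := Finset.sum_fiberwise_of_maps_to (s := S ×ˢ S') (t := T)
    (g := fun p : K × K => p.1 * p.2) (fun p hp => Finset.mem_image.2 ⟨p, hp, rfl⟩)
    (fun p : K × K => ((finrank K ↥(Module.End.maxGenEigenspace F p.1)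
      * finrank K ↥(Module.End.maxGenEigenspace G p.2) : ℕ) : ℝ) * (‖p.1‖ * ‖p.2‖))
  have h3 : L1Trace K F * L1Trace K G
      = ∑ p ∈ S ×ˢ S', ((finrank K ↥(Module.End.maxGenEigenspace F p.1)
          * finrank K ↥(Module.End.maxGenEigenspace G p.2) : ℕ) : ℝ) * (‖p.1‖ * ‖p.2‖) := by
    rw [L1Trace_eq_sum F (fun μ h => (Set.Finite.mem_toFinset (Module.End.finite_hasEigenvalue (f := F))).2
        (Module.End.HasUnifEigenvalue.lt zero_lt_one h)),
      L1Trace_eq_sum G (fun μ h => (Set.Finite.mem_toFinset (Module.End.finite_hasEigenvalue (f := G))).2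
        (Module.End.HasUnifEigenvalue.lt zero_lt_one h))]
    rw [Finset.sum_mul_sum]
    rw [← hS, ← hS', Finset.sum_product]
    apply Finset.sum_congr rfl
    intro l _
    apply Finset.sum_congr rfl
    intro m _
    push_cast
    ring
  rw [h3]
  exact h4

end Tensor

/-! ### The combinatorial finite set of lists -/

/-- The finite set of lists of bidegrees with all entries componentwise positive
summing to `(n, i)`. -/
def GFin : ℕ → ℕ → Finset (List (ℕ × ℕ))
  | 0, 0 => {([] : List (ℕ × ℕ))}
  | 0, _ + 1 => ∅
  | _ + 1, 0 => ∅
  | n + 1, i + 1 =>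
    ((Finset.Icc 1 (n + 1)) ×ˢ (Finset.Icc 1 (i + 1))).attach.biUnion
      fun p => (GFin (n + 1 - p.1.1) (i + 1 - p.1.2)).image (p.1 :: ·)
  termination_by n i => n
  decreasing_by
    have h := Finset.mem_product.1 p.2
    have h1 := Finset.mem_Icc.1 h.1
    omega

theorem mem_GFin : ∀ (n i : ℕ) (l : List (ℕ × ℕ)), l ∈ GFin n i ↔
    (∀ p ∈ l, 1 ≤ p.1 ∧ 1 ≤ p.2) ∧ (l.map Prod.fst).sum = n ∧ (l.map Prod.snd).sum = i
  | 0, 0, l => by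
      rw [GFin]
      simp only [Finset.mem_singleton]
      constructor
      · rintro rfl; simp
      · rintro ⟨hpos, h1, h2⟩
        cases l with
        | nil => rfl
        | cons p t =>
            exfalso
            have := hpos p List.mem_cons_self
            simp only [List.map_cons, List.sum_cons] at h1
            omega
  | 0, i + 1, l => by
      rw [GFin]
      simp only [Finset.notMem_empty, false_iff]
      rintro ⟨hpos, h1, h2⟩
      cases l with
      | nil => simp at h2
      | cons p t =>
          have := hpos p List.mem_cons_self
          simp only [List.map_cons, List.sum_cons] at h1
          omega
  | n + 1, 0, l => by
      rw [GFin]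
      simp only [Finset.notMem_empty, false_iff]
      rintro ⟨hpos, h1, h2⟩
      cases l with
      | nil => simp at h1
      | cons p t =>
          have := hpos p List.mem_cons_self
          simp only [List.map_cons, List.sum_cons] at h2
          omega
  | n + 1, i + 1, l => by
      rw [GFin]
      rw [Finset.mem_biUnion]
      constructor
      · rintro ⟨p, -, hl⟩
        rw [Finset.mem_image] at hl
        obtain ⟨t, ht, rfl⟩ := hl
        have hp := Finset.mem_product.1 p.2
        have hp1 := Finset.mem_Icc.1 hp.1
        have hp2 := Finset.mem_Icc.1 hp.2
        have hrec := (mem_GFin (n + 1 - p.1.1) (i + 1 - p.1.2) t).1 ht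
        refine ⟨?_, ?_, ?_⟩
        · intro q hq
          rcases List.mem_cons.1 hq with rfl | hq
          · omega
          · exact hrec.1 q hq
        · simp only [List.map_cons, List.sum_cons, hrec.2.1]; omega
        · simp only [List.map_cons, List.sum_cons, hrec.2.2]; omega
      · rintro ⟨hpos, h1, h2⟩
        cases l with
        | nil => simp at h1
        | cons p t =>
            have hp := hpos p List.mem_cons_self
            simp only [List.map_cons, List.sum_cons] at h1 h2
            have hps : p.1 ≤ n + 1 := by omega
            have hps' : p.2 ≤ i + 1 := by omega
            refine ⟨⟨p, ?_⟩, Finset.mem_attach _ _, ?_⟩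
            · exact Finset.mem_product.2 ⟨Finset.mem_Icc.2 ⟨hp.1, hps⟩,
                Finset.mem_Icc.2 ⟨hp.2, hps'⟩⟩
            · rw [Finset.mem_image]
              refine ⟨t, (mem_GFin (n + 1 - p.1) (i + 1 - p.2) t).2
                ⟨fun q hq => hpos q (List.mem_cons_of_mem p hq), by omega, by omega⟩, rfl⟩
  termination_by n i l => n
  decreasing_by
    · have h := Finset.mem_product.1 p.2
      have h1 := Finset.mem_Icc.1 h.1
      omega
    · omega

section SumBound
variable {E d b : ℝ}

lemma geom_aux1 (hE : 1 ≤ E) (hd : 0 < d) :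
    ∀ N : ℕ, ∑ m ∈ Finset.Icc 1 N, E * d ^ m * (2 * E * d) ^ (N - m)
      ≤ (2 * E * d) ^ N - d ^ N := by
  intro N
  induction N with
  | zero => simp
  | succ N ih =>
      rw [Finset.sum_Icc_succ_top (by omega : 1 ≤ N + 1)]
      have hstep : ∀ m ∈ Finset.Icc 1 N,
          E * d ^ m * (2 * E * d) ^ (N + 1 - m)
            = (2 * E * d) * (E * d ^ m * (2 * E * d) ^ (N - m)) := by
        intro m hm
        have hmN := (Finset.mem_Icc.1 hm).2
        rw [show N + 1 - m = (N - m) + 1 by omega, pow_succ']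
        ring
      rw [Finset.sum_congr rfl hstep, ← Finset.mul_sum, Nat.sub_self, pow_zero, mul_one,
        pow_succ (2 * E * d) N, pow_succ d N]
      have h2Ed : (0:ℝ) ≤ 2 * E * d := by positivity
      have key := mul_le_mul_of_nonneg_left ih h2Ed
      nlinarith [key, mul_nonneg (sub_nonneg.2 hE) (le_of_lt (mul_pos (pow_pos hd N) hd))]

lemma geom_aux2 (hb : 0 < b) :
    ∀ I : ℕ, ∑ j ∈ Finset.Icc 1 I, b ^ j * (2 * b) ^ (I - j) ≤ (2 * b) ^ I - b ^ I := by
  intro I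
  induction I with
  | zero => simp
  | succ I ih =>
      rw [Finset.sum_Icc_succ_top (by omega : 1 ≤ I + 1)]
      have hstep : ∀ j ∈ Finset.Icc 1 I,
          b ^ j * (2 * b) ^ (I + 1 - j) = (2 * b) * (b ^ j * (2 * b) ^ (I - j)) := by
        intro j hj
        have hjI := (Finset.mem_Icc.1 hj).2
        rw [show I + 1 - j = (I - j) + 1 by omega, pow_succ']
        ring
      rw [Finset.sum_congr rfl hstep, ← Finset.mul_sum, Nat.sub_self, pow_zero, mul_one,
        pow_succ (2 * b) I, pow_succ b I]
      have h2b : (0:ℝ) ≤ 2 * b := by positivity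
      have key := mul_le_mul_of_nonneg_left ih h2b
      nlinarith [key, le_of_lt (mul_pos (pow_pos hb I) hb)]

theorem GFin_sum_le (hE : 1 ≤ E) (hd : 0 < d) (hb : 0 < b) :
    ∀ n i : ℕ, ∑ l ∈ GFin n i, (l.map fun p : ℕ × ℕ => E * d ^ p.1 * b ^ p.2).prod
      ≤ (2 * E * d) ^ n * (2 * b) ^ i
  | 0, 0 => by rw [GFin]; simp
  | 0, i + 1 => by rw [GFin]; simp; positivity
  | n + 1, 0 => by rw [GFin]; simp; positivity
  | n + 1, i + 1 => by
      rw [GFin]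
      have hE0 : (0:ℝ) < E := lt_of_lt_of_le one_pos hE
      have hdisj : ∀ p ∈ ((Finset.Icc 1 (n + 1)) ×ˢ (Finset.Icc 1 (i + 1))).attach,
          ∀ q ∈ ((Finset.Icc 1 (n + 1)) ×ˢ (Finset.Icc 1 (i + 1))).attach, p ≠ q →
          Disjoint ((GFin (n + 1 - p.1.1) (i + 1 - p.1.2)).image (p.1 :: ·))
            ((GFin (n + 1 - q.1.1) (i + 1 - q.1.2)).image (q.1 :: ·)) := by
        intro p _ q _ hpq
        rw [Finset.disjoint_left]
        rintro l hl hl'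
        rw [Finset.mem_image] at hl hl'
        obtain ⟨t, _, rfl⟩ := hl
        obtain ⟨t', _, heq⟩ := hl'
        apply hpq
        apply Subtype.ext
        exact (List.cons.injEq .. ▸ heq.symm).1
      rw [Finset.sum_biUnion hdisj]
      have hsum : ∀ p ∈ ((Finset.Icc 1 (n + 1)) ×ˢ (Finset.Icc 1 (i + 1))).attach,
          ∑ l ∈ (GFin (n + 1 - p.1.1) (i + 1 - p.1.2)).image (p.1 :: ·),
            (l.map fun q : ℕ × ℕ => E * d ^ q.1 * b ^ q.2).prod
          ≤ (E * d ^ p.1.1 * b ^ p.1.2)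
              * ((2 * E * d) ^ (n + 1 - p.1.1) * (2 * b) ^ (i + 1 - p.1.2)) := by
        intro p _
        rw [Finset.sum_image (fun x _ y _ h => (List.cons.injEq .. ▸ h).2)]
        simp only [List.map_cons, List.prod_cons]
        rw [← Finset.mul_sum]
        apply mul_le_mul_of_nonneg_left
          (GFin_sum_le hE hd hb (n + 1 - p.1.1) (i + 1 - p.1.2)) (by positivity)
      refine le_trans (Finset.sum_le_sum hsum) ?_
      rw [Finset.sum_attach (((Finset.Icc 1 (n + 1)) ×ˢ (Finset.Icc 1 (i + 1))))
        (fun p : ℕ × ℕ => (E * d ^ p.1 * b ^ p.2)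
          * ((2 * E * d) ^ (n + 1 - p.1) * (2 * b) ^ (i + 1 - p.2)))]
      rw [Finset.sum_product]
      have hfact : ∀ m j : ℕ, (E * d ^ m * b ^ j)
            * ((2 * E * d) ^ (n + 1 - m) * (2 * b) ^ (i + 1 - j))
          = (E * d ^ m * (2 * E * d) ^ (n + 1 - m)) * (b ^ j * (2 * b) ^ (i + 1 - j)) := by
        intro m j; ring
      simp only [hfact]
      rw [← Finset.sum_mul_sum]
      have h1 := geom_aux1 hE hd (n + 1)
      have h2 := geom_aux2 hb (i + 1)
      have hB : (0:ℝ) ≤ ∑ j ∈ Finset.Icc 1 (i+1), b ^ j * (2 * b) ^ (i + 1 - j) :=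
        Finset.sum_nonneg fun j _ => by positivity
      have hA' : ∑ m ∈ Finset.Icc 1 (n+1), E * d ^ m * (2 * E * d) ^ (n + 1 - m)
          ≤ (2 * E * d) ^ (n + 1) :=
        le_trans h1 (by nlinarith [pow_pos hd (n+1)])
      have hB' : ∑ j ∈ Finset.Icc 1 (i+1), b ^ j * (2 * b) ^ (i + 1 - j) ≤ (2 * b) ^ (i + 1) :=
        le_trans h2 (by nlinarith [pow_pos hb (i+1)])
      exact mul_le_mul hA' hB' hB (by positivity)
  termination_by n i => n
  decreasing_by
    have h := Finset.mem_product.1 p.2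
    have h1 := Finset.mem_Icc.1 h.1
    omega

end SumBound

variable (K : Type) [NormedField K] (W : ℕ × ℕ → Type)
  [∀ p, AddCommGroup (W p)] [∀ p, Module K (W p)]

/-- The iterated tensor product `W p₁ ⊗ (W p₂ ⊗ (⋯ ⊗ K))` indexed by a list of bidegrees. -/
noncomputable def listTensor : List (ℕ × ℕ) → ModuleCat K
  | [] => ModuleCat.of K K
  | p :: l => ModuleCat.of K (W p ⊗[K] (listTensor l))

/-- The endomorphism `F ⊗ ⋯ ⊗ F` of the iterated tensor product. -/
noncomputable def listEnd (F : ∀ p, W p →ₗ[K] W p) :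
    (l : List (ℕ × ℕ)) → (listTensor K W l : Type) →ₗ[K] (listTensor K W l : Type)
  | [] => LinearMap.id
  | p :: l => TensorProduct.map (F p) (listEnd F l)

/-- The `(n,i)`-th bigraded piece of the tensor algebra `T(W)` of an `ℕ²`-bigraded vector
space: the direct sum, over all tuples of bidegrees summing to `(n,i)`, of the corresponding
iterated tensor products. -/
noncomputable abbrev TensorAlgPiece (n i : ℕ) : Type :=
  Π₀ l : {l : List (ℕ × ℕ) // (l.map Prod.fst).sum = n ∧ (l.map Prod.snd).sum = i},
    (listTensor K W l.1 : Type)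

/-- The endomorphism of `T(W)_{n,i}` induced by `F`, acting as `F ⊗ ⋯ ⊗ F` on each summand. -/
noncomputable def tensorAlgEnd (F : ∀ p, W p →ₗ[K] W p) (n i : ℕ) :
    TensorAlgPiece K W n i →ₗ[K] TensorAlgPiece K W n i :=
  DFinsupp.mapRange.linearMap fun l => listEnd K W F l.1

/-! ### Auxiliary facts about `listTensor` and `listEnd` -/

instance listTensor_finiteDimensional [∀ p, FiniteDimensional K (W p)] :
    ∀ l : List (ℕ × ℕ), FiniteDimensional K (listTensor K W l : Type)
  | [] => inferInstanceAs (FiniteDimensional K K)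
  | p :: l =>
      haveI := listTensor_finiteDimensional l
      inferInstanceAs (FiniteDimensional K (W p ⊗[K] (listTensor K W l : Type)))

lemma listTensor_subsingleton (hsub : ∀ p : ℕ × ℕ, p.1 = 0 ∨ p.2 = 0 → Subsingleton (W p)) :
    ∀ l : List (ℕ × ℕ), (∃ p ∈ l, p.1 = 0 ∨ p.2 = 0) →
      Subsingleton (listTensor K W l : Type)
  | [], h => absurd h (by simp)
  | p :: l, h => by
      by_cases hp : p.1 = 0 ∨ p.2 = 0
      · haveI := hsub p hp
        exact inferInstanceAs (Subsingleton (W p ⊗[K] (listTensor K W l : Type)))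
      · have hl : ∃ q ∈ l, q.1 = 0 ∨ q.2 = 0 := by
          obtain ⟨q, hq, hq2⟩ := h
          rcases List.mem_cons.1 hq with rfl | hq
          · exact absurd hq2 hp
          · exact ⟨q, hq, hq2⟩
        haveI := listTensor_subsingleton hsub l hl
        exact inferInstanceAs (Subsingleton (W p ⊗[K] (listTensor K W l : Type)))

lemma L1Trace_listEnd_le [IsAlgClosed K] [∀ p, FiniteDimensional K (W p)]
    (F : ∀ p, W p →ₗ[K] W p) {E d b : ℝ} (hE : 1 ≤ E) (hd : 0 < d) (hb : 0 < b)
    (hbound : ∀ p : ℕ × ℕ, L1Trace K (F p) ≤ E * d ^ p.1 * b ^ p.2) :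
    ∀ l : List (ℕ × ℕ), L1Trace K (listEnd K W F l)
      ≤ (l.map fun p : ℕ × ℕ => E * d ^ p.1 * b ^ p.2).prod
  | [] => by
      rw [List.map_nil, List.prod_nil]
      exact le_of_eq (L1Trace_id_field (K := K))
  | p :: l => by
      rw [List.map_cons, List.prod_cons]
      have hrec := L1Trace_listEnd_le F hE hd hb hbound l
      have hE0 : (0:ℝ) < E := lt_of_lt_of_le one_pos hE
      calc L1Trace K (listEnd K W F (p :: l))
          = L1Trace K (TensorProduct.map (F p) (listEnd K W F l)) := rfl
        _ ≤ L1Trace K (F p) * L1Trace K (listEnd K W F l) :=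
            L1Trace_tensor_le (F p) (listEnd K W F l)
        _ ≤ (E * d ^ p.1 * b ^ p.2)
              * (l.map fun p : ℕ × ℕ => E * d ^ p.1 * b ^ p.2).prod :=
            mul_le_mul (hbound p) hrec (L1Trace_nonneg _) (by positivity)

/-- If the bigraded pieces of `W` vanish in rows and columns `0` and satisfy
`|F, W_{n,i}| ≤ E·dⁿ·bⁱ` with `E ≥ 1`, then the bigraded pieces of the tensor algebra satisfy
`|F, T(W)_{n,i}| ≤ (2Ed)ⁿ·(2b)ⁱ`. -/
theorem L1Trace_tensorAlgebra_le {K : Type} [NormedField K] [IsAlgClosed K]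
    (W : ℕ × ℕ → Type)
    [∀ p, AddCommGroup (W p)] [∀ p, Module K (W p)] [∀ p, FiniteDimensional K (W p)]
    (F : ∀ p, W p →ₗ[K] W p)
    (hW0 : ∀ i : ℕ, Subsingleton (W (0, i))) (hWn0 : ∀ n : ℕ, Subsingleton (W (n, 0)))
    (E d b : ℝ) (hE : 1 ≤ E) (hd : 0 < d) (hb : 0 < b)
    (hbound : ∀ p : ℕ × ℕ, L1Trace K (F p) ≤ E * d ^ p.1 * b ^ p.2) :
    ∀ n i : ℕ, L1Trace K (tensorAlgEnd K W F n i) ≤ (2 * E * d) ^ n * (2 * b) ^ i := by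
  intro n i
  classical
  have hsub : ∀ p : ℕ × ℕ, p.1 = 0 ∨ p.2 = 0 → Subsingleton (W p) := by
    rintro ⟨pn, pi⟩ (h | h)
    · simp only at h; subst h; exact hW0 pi
    · simp only at h; subst h; exact hWn0 pn
  have hcomp : ∀ l : {l : List (ℕ × ℕ) // (l.map Prod.fst).sum = n ∧ (l.map Prod.snd).sum = i},
      l ∉ (GFin n i).subtype
          (fun t : List (ℕ × ℕ) => (t.map Prod.fst).sum = n ∧ (t.map Prod.snd).sum = i) →
      Subsingleton (listTensor K W l.1 : Type) := by
    intro l hl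
    rw [Finset.mem_subtype] at hl
    have hnot := hl ∘ (mem_GFin n i l.1).2
    have : ∃ p ∈ l.1, p.1 = 0 ∨ p.2 = 0 := by
      by_contra hno
      push_neg at hno
      exact hnot ⟨fun p hp => by have := hno p hp; omega, l.2.1, l.2.2⟩
    exact listTensor_subsingleton K W hsub l.1 this
  have heq : L1Trace K (tensorAlgEnd K W F n i)
      = ∑ l ∈ (GFin n i).subtype
          (fun t : List (ℕ × ℕ) => (t.map Prod.fst).sum = n ∧ (t.map Prod.snd).sum = i),
        L1Trace K (listEnd K W F l.1) :=
    L1Trace_dfinsupp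
      (V := fun l : {l : List (ℕ × ℕ) //
        (l.map Prod.fst).sum = n ∧ (l.map Prod.snd).sum = i} => (listTensor K W l.1 : Type))
      (fun l => listEnd K W F l.1) _ hcomp
  rw [heq]
  have hstep := Finset.sum_le_sum (s := (GFin n i).subtype
      (fun t : List (ℕ × ℕ) => (t.map Prod.fst).sum = n ∧ (t.map Prod.snd).sum = i))
    fun l _ => L1Trace_listEnd_le K W F hE hd hb hbound l.1
  refine le_trans hstep ?_
  have hfil : Finset.filter
      (fun t : List (ℕ × ℕ) => (t.map Prod.fst).sum = n ∧ (t.map Prod.snd).sum = i) (GFin n i)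
      = GFin n i := by
    apply Finset.filter_true_of_mem
    intro l hl
    have := (mem_GFin n i l).1 hl
    exact ⟨this.2.1, this.2.2⟩
  have hconv := Finset.sum_subtype_eq_sum_filter
    (f := fun t : List (ℕ × ℕ) => (t.map fun p : ℕ × ℕ => E * d ^ p.1 * b ^ p.2).prod)
    (p := fun t : List (ℕ × ℕ) => (t.map Prod.fst).sum = n ∧ (t.map Prod.snd).sum = i)
    (s := GFin n i)
  rw [hfil] at hconv
  exact le_trans (le_of_eq hconv) (GFin_sum_le hE hd hb n i)
end

section
/- Let k be a field, let a ≥ 1 be an integer, let c₁, c₂, c₃, c₄ be four distinct elements of k, and for i = 1, …, 4 let T_i ∈ k[X] be a monic polynomial of degree k_i, with T₁, …, T₄ pairwise coprime. Assume k₁ + k₂ + k₃ + k₄ ≤ 2a, and assume there exist coprime polynomials A, B ∈ k[X] with deg A ≤ a, deg B ≤ a, max(deg A, deg B) = a, and T_i ∣ (A − c_i·B) for every i = 1, …, 4. Then the k-linear subspace L = {(f, g) : f, g ∈ k[X], deg f ≤ a, deg g ≤ a, and T_i ∣ (f − c_i·g) for i = 1, …, 4} of the space of pairs of polynomials of degree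 at most a has k-dimension exactly 2a + 2 − (k₁ + k₂ + k₃ + k₄). -/
open Polynomial

/-- The `k`-linear subspace `L` of pairs `(f, g)` of polynomials of degree at most `a`
satisfying the incidence conditions `T i ∣ f - c i · g` for `i = 1, …, 4`. -/
noncomputable def incidenceSubspace (k : Type*) [Field k] (a : ℕ) (c : Fin 4 → k)
    (T : Fin 4 → k[X]) : Submodule k (k[X] × k[X]) where
  carrier := {p | p.1.degree ≤ (a : WithBot ℕ) ∧ p.2.degree ≤ (a : WithBot ℕ) ∧
    ∀ i, T i ∣ (p.1 - C (c i) * p.2)}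
  add_mem' := by
    rintro ⟨f₁, g₁⟩ ⟨f₂, g₂⟩ ⟨h₁, h₂, h₃⟩ ⟨h₁', h₂', h₃'⟩
    refine ⟨(Polynomial.degree_add_le _ _).trans (max_le h₁ h₁'),
      (Polynomial.degree_add_le _ _).trans (max_le h₂ h₂'), fun i => ?_⟩
    have h : (f₁ + f₂) - C (c i) * (g₁ + g₂)
        = (f₁ - C (c i) * g₁) + (f₂ - C (c i) * g₂) := by ring
    exact h ▸ dvd_add (h₃ i) (h₃' i)
  zero_mem' := by
    refine ⟨?_, ?_, fun i => ?_⟩ <;> simp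
  smul_mem' := by
    rintro r ⟨f, g⟩ ⟨h₁, h₂, h₃⟩
    refine ⟨(Polynomial.degree_smul_le _ _).trans h₁,
      (Polynomial.degree_smul_le _ _).trans h₂, fun i => ?_⟩
    have h : r • f - C (c i) * (r • g) = C r * (f - C (c i) * g) := by
      simp only [Polynomial.smul_eq_C_mul]; ring
    exact h ▸ (h₃ i).mul_left _

private lemma solve_bezout {k : Type*} [Field k] {a : ℕ} {P Q : k[X]}
    (hPQ : IsCoprime P Q) (hQ : Q.degree = (a : WithBot ℕ)) (hP : P.degree ≤ (a : WithBot ℕ))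
    (R : k[X]) (hR : R.natDegree ≤ 2 * a) :
    ∃ f g : k[X], f.degree ≤ (a : WithBot ℕ) ∧ g.degree ≤ (a : WithBot ℕ) ∧
      f * Q - P * g = R := by
  have hQ0 : Q ≠ 0 := fun h => by simp [h] at hQ
  have hQn : Q.natDegree = a := natDegree_eq_of_degree_eq_some hQ
  obtain ⟨u, v, huv⟩ := hPQ
  set g₀ : k[X] := -(R * u) with hg₀
  set q' : k[X] := g₀ / Q with hq'
  refine ⟨R * v - P * q', g₀ - Q * q', ?_, ?_, by linear_combination R * huv⟩
  · set f : k[X] := R * v - P * q' with hf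
    set g : k[X] := g₀ - Q * q' with hg
    have heq : f * Q - P * g = R := by rw [hf, hg]; linear_combination R * huv
    by_cases hf0 : f = 0
    · simp [hf0]
    · have hgQ : g.degree < Q.degree := by
        have : g = g₀ % Q := by
          rw [hg, hq']
          have := EuclideanDomain.div_add_mod g₀ Q
          linear_combination -this
        rw [this]
        exact EuclideanDomain.mod_lt _ hQ0
      have hgdeg : g.degree ≤ (a : WithBot ℕ) := le_of_lt (hQ ▸ hgQ)
      have hgn : g.natDegree ≤ a := natDegree_le_iff_degree_le.mpr hgdeg
      have hPn : P.natDegree ≤ a := natDegree_le_iff_degree_le.mpr hP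
      have hfq : f * Q = R + P * g := by linear_combination heq
      have h1 : (f * Q).natDegree ≤ 2 * a := by
        rw [hfq]
        refine (natDegree_add_le _ _).trans (max_le hR ?_)
        exact natDegree_mul_le.trans (by omega)
      rw [natDegree_mul hf0 hQ0, hQn] at h1
      exact natDegree_le_iff_degree_le.mp (by omega)
  · have : g₀ - Q * q' = g₀ % Q := by
      rw [hq']
      have := EuclideanDomain.div_add_mod g₀ Q
      linear_combination -this
    rw [this]
    exact le_of_lt (hQ ▸ EuclideanDomain.mod_lt _ hQ0)
/-- If the four incidence subschemes `T i` (pairwise coprime, of total degree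
at most `2a`) lie on an "irreducible section", i.e. there is a coprime pair `(A, B)` of maximal
degree exactly `a` satisfying the incidence conditions, then the linear space `L` of all pairs
satisfying the incidence conditions has dimension exactly `2a + 2 - (k₁ + k₂ + k₃ + k₄)`. -/
theorem finrank_incidenceSubspace {k : Type*} [Field k] (a : ℕ) (ha : 1 ≤ a)
    (c : Fin 4 → k) (hc : Function.Injective c)
    (κ : Fin 4 → ℕ) (T : Fin 4 → k[X])
    (hTmonic : ∀ i, (T i).Monic) (hTdeg : ∀ i, (T i).natDegree = κ i)
    (hTcop : ∀ i j, i ≠ j → IsCoprime (T i) (T j))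
    (hsum : κ 0 + κ 1 + κ 2 + κ 3 ≤ 2 * a)
    (A B : k[X]) (hAB : IsCoprime A B)
    (hA : A.degree ≤ (a : WithBot ℕ)) (hB : B.degree ≤ (a : WithBot ℕ))
    (hmax : max A.degree B.degree = (a : WithBot ℕ))
    (hdvd : ∀ i, T i ∣ (A - C (c i) * B)) :
    Module.finrank k (incidenceSubspace k a c T) = 2 * a + 2 - (κ 0 + κ 1 + κ 2 + κ 3) := by
  classical
  set N := κ 0 + κ 1 + κ 2 + κ 3 with hN
  set L := incidenceSubspace k a c T with hLdef
  set D := ∏ i : Fin 4, T i with hDdef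
  have hDmonic : D.Monic := monic_prod_of_monic _ _ fun i _ => hTmonic i
  have hD0 : D ≠ 0 := hDmonic.ne_zero
  have hDdeg : D.natDegree = N := by
    rw [hDdef, natDegree_prod _ _ fun i _ => (hTmonic i).ne_zero]
    simp [Fin.sum_univ_four, hTdeg, hN]
  have hA0 : A ≠ 0 := by
    intro h
    have hBu : IsUnit B := isCoprime_zero_left.mp (h ▸ hAB)
    have hBd : B.degree = 0 := degree_eq_zero_of_isUnit hBu
    rw [h, degree_zero, hBd] at hmax
    simp only [max_eq_right (by exact bot_le : (⊥ : WithBot ℕ) ≤ 0)] at hmax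
    have : a = 0 := by exact_mod_cast hmax.symm
    omega
  have hTB : ∀ i, IsCoprime (T i) B := by
    intro i
    obtain ⟨u, v, huv⟩ := hAB
    obtain ⟨s, hs⟩ := hdvd i
    exact ⟨u * s, u * C (c i) + v, by linear_combination huv - u * hs⟩
  have hdvdD : ∀ f g : k[X], (∀ i, T i ∣ (f - C (c i) * g)) → D ∣ (f * B - A * g) := by
    intro f g hfg
    refine Fintype.prod_dvd_of_coprime (fun i j hij => hTcop i j hij) fun i => ?_
    have h : f * B - A * g = (f - C (c i) * g) * B - (A - C (c i) * B) * g := by ring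
    rw [h]
    exact dvd_sub ((hfg i).mul_right _) ((hdvd i).mul_right _)
  have hmem : ∀ x : L, D ∣ ((x : k[X] × k[X]).1 * B - A * (x : k[X] × k[X]).2) :=
    fun x => hdvdD _ _ x.2.2.2
  have hcancel : ∀ p : k[X], D ∣ p → D * (p /ₘ D) = p := by
    intro p hp
    conv_rhs => rw [← modByMonic_add_div p D]
    rw [(modByMonic_eq_zero_iff_dvd hDmonic).mpr hp, zero_add]
  let ψ : L →ₗ[k] k[X] :=
    { toFun := fun x => ((x : k[X] × k[X]).1 * B - A * (x : k[X] × k[X]).2) /ₘ D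
      map_add' := by
        intro x y
        apply mul_left_cancel₀ hD0
        rw [mul_add, hcancel _ (hmem x), hcancel _ (hmem y), hcancel _ (hmem (x + y))]
        simp only [Submodule.coe_add, Prod.fst_add, Prod.snd_add]
        ring
      map_smul' := by
        intro r x
        apply mul_left_cancel₀ hD0
        rw [RingHom.id_apply, mul_smul_comm, hcancel _ (hmem x), hcancel _ (hmem (r • x))]
        simp only [SetLike.val_smul, Prod.smul_fst, Prod.smul_snd, smul_eq_C_mul]
        ring }
  have hψ : ∀ x : L, ψ x = ((x : k[X] × k[X]).1 * B - A * (x : k[X] × k[X]).2) /ₘ D :=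
    fun _ => rfl
  have hABmem : ((A, B) : k[X] × k[X]) ∈ L := ⟨hA, hB, hdvd⟩
  set xAB : L := ⟨(A, B), hABmem⟩ with hxABdef
  have hxAB0 : xAB ≠ 0 := by
    intro h
    apply hA0
    have := congrArg (fun z : L => (z : k[X] × k[X]).1) h
    simpa [hxABdef] using this
  have hker : LinearMap.ker ψ = Submodule.span k {xAB} := by
    apply le_antisymm
    · intro x hx
      rw [LinearMap.mem_ker, hψ] at hx
      set f := (x : k[X] × k[X]).1 with hfdef
      set g := (x : k[X] × k[X]).2 with hgdef
      have hx0 : f * B - A * g = 0 := by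
        rw [← hcancel _ (hmem x), hx, mul_zero]
      have hfg : f * B = A * g := sub_eq_zero.mp hx0
      have hAf : A ∣ f := hAB.dvd_of_dvd_mul_right ⟨g, hfg⟩
      obtain ⟨q, hq⟩ := hAf
      have hg : g = q * B := by
        apply mul_left_cancel₀ hA0
        rw [← hfg, hq]; ring
      rcases eq_or_ne q 0 with hq0 | hq0
      · have : x = 0 := by
          apply Subtype.ext
          have h1 : f = 0 := by rw [hq, hq0, mul_zero]
          have h2 : g = 0 := by rw [hg, hq0, zero_mul]
          exact Prod.ext (by rw [← hfdef]; exact h1) (by rw [← hgdef]; exact h2)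
        rw [this]; exact Submodule.zero_mem _
      · have hdq : q.natDegree = 0 := by
          have hfdeg : f.degree ≤ (a : WithBot ℕ) := x.2.1
          have hgdeg : g.degree ≤ (a : WithBot ℕ) := x.2.2.1
          rcases max_choice A.degree B.degree with hmA | hmB
          · have hdA : A.natDegree = a :=
              natDegree_eq_of_degree_eq_some (hmA ▸ hmax)
            have hf0 : f ≠ 0 := by
              rw [hq]; exact mul_ne_zero hA0 hq0
            have : f.natDegree = A.natDegree + q.natDegree := by
              rw [hq, natDegree_mul hA0 hq0]
            have hfa : f.natDegree ≤ a := natDegree_le_iff_degree_le.mpr hfdeg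
            omega
          · have hdBdeg : B.degree = (a : WithBot ℕ) := by rw [← hmB]; exact hmax
            have hB0 : B ≠ 0 := fun h => by simp [h] at hdBdeg
            have hdB : B.natDegree = a := natDegree_eq_of_degree_eq_some hdBdeg
            have : g.natDegree = q.natDegree + B.natDegree := by
              rw [hg, natDegree_mul hq0 hB0]
            have hga : g.natDegree ≤ a := natDegree_le_iff_degree_le.mpr hgdeg
            omega
        obtain ⟨r, hr⟩ := natDegree_eq_zero.mp hdq
        refine Submodule.mem_span_singleton.mpr ⟨r, ?_⟩
        apply Subtype.ext
        refine Prod.ext ?_ ?_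
        · show r • A = f
          rw [hq, ← hr, smul_eq_C_mul]; ring
        · show r • B = g
          rw [hg, ← hr, smul_eq_C_mul]
    · rw [Submodule.span_singleton_le_iff_mem, LinearMap.mem_ker, hψ]
      simp [hxABdef]
  have hrange : LinearMap.range ψ = degreeLT k (2 * a - N + 1) := by
    apply le_antisymm
    · rintro p ⟨x, rfl⟩
      rw [mem_degreeLT]
      rcases eq_or_ne (ψ x) 0 with h0 | h0
      · rw [h0, degree_zero]
        exact WithBot.bot_lt_coe _
      · set f := (x : k[X] × k[X]).1 with hfdef
        set g := (x : k[X] × k[X]).2 with hgdef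
        have hp : D * ψ x = f * B - A * g := hcancel _ (hmem x)
        have hfa : f.natDegree ≤ a := natDegree_le_iff_degree_le.mpr x.2.1
        have hga : g.natDegree ≤ a := natDegree_le_iff_degree_le.mpr x.2.2.1
        have hBa : B.natDegree ≤ a := natDegree_le_iff_degree_le.mpr hB
        have hAa : A.natDegree ≤ a := natDegree_le_iff_degree_le.mpr hA
        have hdp : (f * B - A * g).natDegree ≤ 2 * a := by
          refine (natDegree_sub_le _ _).trans (max_le ?_ ?_) <;>
            exact natDegree_mul_le.trans (by omega)
        have hmul : (D * ψ x).natDegree = N + (ψ x).natDegree := by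
          rw [natDegree_mul hD0 h0, hDdeg]
        rw [hp] at hmul
        refine (natDegree_lt_iff_degree_lt h0).mp ?_
        omega
    · intro h hh
      rw [mem_degreeLT] at hh
      have hhnat : h.natDegree ≤ 2 * a - N := by
        rcases eq_or_ne h 0 with h0 | h0
        · simp [h0]
        · have := (natDegree_lt_iff_degree_lt h0).mpr hh
          omega
      have hDh : (D * h).natDegree ≤ 2 * a :=
        natDegree_mul_le.trans (by omega)
      have key : ∀ f g : k[X], f.degree ≤ (a : WithBot ℕ) → g.degree ≤ (a : WithBot ℕ) →
          f * B - A * g = D * h → h ∈ LinearMap.range ψ := by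
        intro f g hf hg heq
        have hmemL : ((f, g) : k[X] × k[X]) ∈ L := by
          refine ⟨hf, hg, fun i => ?_⟩
          have h1 : T i ∣ B * (f - C (c i) * g) := by
            have h2 : B * (f - C (c i) * g) = (f * B - A * g) + (A - C (c i) * B) * g := by
              ring
            rw [h2, heq]
            exact dvd_add ((Finset.dvd_prod_of_mem T (Finset.mem_univ i)).mul_right h)
              ((hdvd i).mul_right g)
          exact (hTB i).dvd_of_dvd_mul_left h1
        refine ⟨⟨(f, g), hmemL⟩, ?_⟩
        show (f * B - A * g) /ₘ D = h
        rw [heq, mul_divByMonic_cancel_left _ hDmonic]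
      rcases max_choice A.degree B.degree with hmA | hmB
      · have hdA : A.degree = (a : WithBot ℕ) := by rw [← hmA]; exact hmax
        obtain ⟨f', g', hf', hg', heq⟩ :=
          solve_bezout hAB.symm hdA hB (-(D * h)) (by simpa using hDh)
        exact key g' f' hg' hf' (by linear_combination -heq)
      · have hdB : B.degree = (a : WithBot ℕ) := by rw [← hmB]; exact hmax
        obtain ⟨f, g, hf, hg, heq⟩ := solve_bezout hAB hdB hA (D * h) hDh
        exact key f g hf hg heq
  have hfd : FiniteDimensional k L := by
    have h1 : FiniteDimensional k (degreeLT k (a + 1)) :=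
      Module.Finite.equiv (degreeLTEquiv k (a + 1)).symm
    have hinj : Function.Injective
        (fun x : L => ((⟨(x : k[X] × k[X]).1, mem_degreeLT.mpr
            (lt_of_le_of_lt x.2.1 (by exact_mod_cast lt_add_one a))⟩,
          ⟨(x : k[X] × k[X]).2, mem_degreeLT.mpr
            (lt_of_le_of_lt x.2.2.1 (by exact_mod_cast lt_add_one a))⟩) :
          degreeLT k (a + 1) × degreeLT k (a + 1))) := by
      intro x y hxy
      apply Subtype.ext
      have h1 := congrArg (fun z : degreeLT k (a + 1) × degreeLT k (a + 1) => (z.1 : k[X])) hxy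
      have h2 := congrArg (fun z : degreeLT k (a + 1) × degreeLT k (a + 1) => (z.2 : k[X])) hxy
      exact Prod.ext h1 h2
    exact FiniteDimensional.of_injective
      { toFun := _
        map_add' := fun x y => by
          apply Prod.ext <;> apply Subtype.ext <;> simp
        map_smul' := fun r x => by
          apply Prod.ext <;> apply Subtype.ext <;> simp } hinj
  have hrank := LinearMap.finrank_range_add_finrank_ker ψ
  rw [hker, hrange, finrank_span_singleton hxAB0] at hrank
  have hfr : Module.finrank k (degreeLT k (2 * a - N + 1)) = 2 * a - N + 1 := by
    rw [(degreeLTEquiv k _).finrank_eq]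
    simp
  rw [hfr] at hrank
  omega
end

section
/- Let k be an algebraically closed field, let a ≥ 1 be an integer, let c₁, c₂, c₃, c₄ be four distinct elements of k, and for i = 1, …, 4 let T_i ∈ k[X] be a monic polynomial of degree k_i, with T₁, …, T₄ pairwise coprime. If k₁ + k₂ + k₃ + k₄ ≤ a, then there exist coprime polynomials A, B ∈ k[X] with deg A ≤ a, deg B ≤ a, max(deg A, deg B) = a, such that T_i ∣ (A − c_i·B) for every i = 1, …, 4. -/
open Polynomial

theorem crt_aux {R : Type*} [CommRing R] {ι : Type*} [Fintype ι] [DecidableEq ι]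
    (t : ι → R) (h : ∀ i j, i ≠ j → IsCoprime (t i) (t j)) (v : ι → R) :
    ∃ r : R, ∀ i, t i ∣ r - v i := by
  have hcop : ∀ i, IsCoprime (t i) (∏ j ∈ Finset.univ.erase i, t j) := fun i =>
    IsCoprime.prod_right fun j hj => h i j fun e => (Finset.ne_of_mem_erase hj) e.symm
  choose u w hw using hcop
  refine ⟨∑ i, v i * (w i * ∏ j ∈ Finset.univ.erase i, t j), fun i => ?_⟩
  rw [← Finset.add_sum_erase _ _ (Finset.mem_univ i)]
  have h1 : t i ∣ v i * (w i * ∏ j ∈ Finset.univ.erase i, t j) - v i := by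
    have : w i * ∏ j ∈ Finset.univ.erase i, t j - 1 = -(u i * t i) := by
      have := hw i; linear_combination this
    refine ⟨-(v i * u i), ?_⟩
    calc v i * (w i * ∏ j ∈ Finset.univ.erase i, t j) - v i
        = v i * (w i * ∏ j ∈ Finset.univ.erase i, t j - 1) := by ring
      _ = v i * (-(u i * t i)) := by rw [this]
      _ = t i * -(v i * u i) := by ring
  have h2 : t i ∣ ∑ j ∈ Finset.univ.erase i, v j * (w j * ∏ l ∈ Finset.univ.erase j, t l) := by
    refine Finset.dvd_sum fun j hj => ?_
    have : t i ∣ ∏ l ∈ Finset.univ.erase j, t l :=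
      Finset.dvd_prod_of_mem _ (Finset.mem_erase.2 ⟨(Finset.ne_of_mem_erase hj).symm, Finset.mem_univ i⟩)
    exact Dvd.dvd.mul_left (Dvd.dvd.mul_left this _) _
  have := dvd_add h1 h2
  convert this using 1
  ring

/-- Over an algebraically closed field, if `k₁ + k₂ + k₃ + k₄ ≤ a`, then any
four pairwise coprime monic polynomials `T i` of degrees `k i`, attached to four distinct
fiber values `c i`, lie on an "irreducible section": there is a coprime pair `(A, B)` with
`deg A ≤ a`, `deg B ≤ a`, `max (deg A) (deg B) = a` and `T i ∣ A - c i · B` for all `i`. -/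
theorem exists_irreducible_section {k : Type*} [Field k] [IsAlgClosed k]
    (a : ℕ) (ha : 1 ≤ a)
    (c : Fin 4 → k) (hc : Function.Injective c)
    (κ : Fin 4 → ℕ) (T : Fin 4 → k[X])
    (hTmonic : ∀ i, (T i).Monic) (hTdeg : ∀ i, (T i).natDegree = κ i)
    (hTcop : ∀ i j, i ≠ j → IsCoprime (T i) (T j))
    (hsum : κ 0 + κ 1 + κ 2 + κ 3 ≤ a) :
    ∃ A B : k[X], IsCoprime A B ∧
      A.degree ≤ (a : WithBot ℕ) ∧ B.degree ≤ (a : WithBot ℕ) ∧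
      max A.degree B.degree = (a : WithBot ℕ) ∧
      ∀ i, T i ∣ (A - C (c i) * B) := by
  obtain ⟨r, hr⟩ := crt_aux T hTcop (fun i => C (c i))
  set P : k[X] := ∏ i, T i with hP
  have hPm : P.Monic := monic_prod_of_monic _ _ fun i _ => hTmonic i
  have hPdeg : P.natDegree ≤ a := by
    rw [hP, natDegree_prod _ _ fun i _ => (hTmonic i).ne_zero]
    simpa [Fin.sum_univ_four, hTdeg] using hsum
  set A : k[X] := r %ₘ P + P * X ^ (a - P.natDegree) with hA
  have hAm : (P * X ^ (a - P.natDegree)).Monic := hPm.mul (monic_X_pow _)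
  have hdeg2 : (P * X ^ (a - P.natDegree)).degree = (a : WithBot ℕ) := by
    rw [degree_eq_natDegree hAm.ne_zero, natDegree_mul hPm.ne_zero (pow_ne_zero _ X_ne_zero)]
    rw [natDegree_X_pow]
    exact_mod_cast Nat.add_sub_cancel' hPdeg
  have hdeg1 : (r %ₘ P).degree < (a : WithBot ℕ) := by
    refine lt_of_lt_of_le (degree_modByMonic_lt r hPm) ?_
    rw [degree_eq_natDegree hPm.ne_zero]
    exact_mod_cast hPdeg
  have hAdeg : A.degree = (a : WithBot ℕ) := by
    rw [hA, degree_add_eq_right_of_degree_lt (by rw [hdeg2]; exact hdeg1), hdeg2]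
  refine ⟨A, 1, isCoprime_one_right, le_of_eq hAdeg,
    le_trans degree_one_le (by exact_mod_cast Nat.zero_le a), ?_, fun i => ?_⟩
  · rw [hAdeg, degree_one]
    exact max_eq_left (by exact_mod_cast Nat.zero_le a)
  · have hTP : T i ∣ P := Finset.dvd_prod_of_mem _ (Finset.mem_univ i)
    have h1 : T i ∣ r - C (c i) := hr i
    have : A - C (c i) * 1 = (r - C (c i)) + P * (X ^ (a - P.natDegree) - r /ₘ P) := by
      rw [hA, modByMonic_eq_sub_mul_div r P]; ring
    rw [this]
    exact dvd_add h1 (hTP.mul_right _)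
end

section
/- Let k be an algebraically closed field, let a ≥ 1 be an integer, let c₁, c₂, c₃, c₄ be four distinct elements of k, and for i = 1, …, 4 let T_i ∈ k[X] be a monic polynomial of degree k_i, with T₁, …, T₄ pairwise coprime. Let x₀ ∈ k satisfy T_i(x₀) ≠ 0 for all i, and let y₀ ∈ k with y₀ ≠ c_i for all i. If k₁ + k₂ + k₃ + k₄ < a, then there exist coprime polynomials A, B ∈ k[X] with deg A ≤ a, deg B ≤ a, max(deg A, deg B) = a, such that T_i ∣ (A − c_i·B) for every i = 1, …, 4 and A(x₀) = y₀·B(x₀). -/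
open Polynomial

private lemma isCoprime_X_sub_C_of_eval_ne {k : Type*} [Field k] (p : k[X]) (x : k)
    (h : p.eval x ≠ 0) : IsCoprime (X - C x) p := by
  have hd : (X - C x) ∣ (p - C (p.eval x)) :=
    dvd_iff_isRoot.mpr (by simp [IsRoot])
  obtain ⟨q, hq⟩ := hd
  have key : p - (X - C x) * q = C (p.eval x) := by rw [← hq]; ring
  refine ⟨-(C (p.eval x)⁻¹) * q, C (p.eval x)⁻¹, ?_⟩
  calc -(C (p.eval x)⁻¹) * q * (X - C x) + C (p.eval x)⁻¹ * p
      = C (p.eval x)⁻¹ * (p - (X - C x) * q) := by ring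
    _ = C (p.eval x)⁻¹ * C (p.eval x) := by rw [key]
    _ = 1 := by rw [← C_mul, inv_mul_cancel₀ h, C_1]

/-- Pointed version: over an algebraically closed field, if
`k₁ + k₂ + k₃ + k₄ < a`, then any four pairwise coprime monic polynomials `T i` of degrees
`k i`, attached to four distinct fiber values `c i`, avoiding a base point `(x₀, y₀)` with
`T i x₀ ≠ 0` and `y₀ ≠ c i`, lie on an "irreducible section" through the base point:
there is a coprime pair `(A, B)` with `deg A ≤ a`, `deg B ≤ a`, `max (deg A) (deg B) = a`,
`T i ∣ A - c i · B` for all `i`, and `A(x₀) = y₀ · B(x₀)`. -/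
theorem exists_irreducible_section_pointed {k : Type*} [Field k] [IsAlgClosed k]
    (a : ℕ) (ha : 1 ≤ a)
    (c : Fin 4 → k) (hc : Function.Injective c)
    (κ : Fin 4 → ℕ) (T : Fin 4 → k[X])
    (hTmonic : ∀ i, (T i).Monic) (hTdeg : ∀ i, (T i).natDegree = κ i)
    (hTcop : ∀ i j, i ≠ j → IsCoprime (T i) (T j))
    (x₀ y₀ : k) (hx₀ : ∀ i, (T i).eval x₀ ≠ 0) (hy₀ : ∀ i, y₀ ≠ c i)
    (hsum : κ 0 + κ 1 + κ 2 + κ 3 < a) :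
    ∃ A B : k[X], IsCoprime A B ∧
      A.degree ≤ (a : WithBot ℕ) ∧ B.degree ≤ (a : WithBot ℕ) ∧
      max A.degree B.degree = (a : WithBot ℕ) ∧
      (∀ i, T i ∣ (A - C (c i) * B)) ∧
      A.eval x₀ = y₀ * B.eval x₀ := by
  classical
  -- moduli and targets for the CRT
  set m : Fin 5 → k[X] := fun i => if h : (i : ℕ) < 4 then T ⟨i, h⟩ else X - C x₀ with hm
  set t : Fin 5 → k[X] := fun i => if h : (i : ℕ) < 4 then C (c ⟨i, h⟩) else C y₀ with ht
  have hpair : Pairwise (Function.onFun IsCoprime fun i => Ideal.span {m i}) := by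
    intro i j hij
    simp only [Function.onFun, Ideal.isCoprime_span_singleton_iff, hm]
    by_cases hi : (i : ℕ) < 4 <;> by_cases hj : (j : ℕ) < 4 <;>
      simp only [hi, hj, dif_pos, dif_neg, not_false_iff]
    · exact hTcop _ _ (by
        intro h
        exact hij (Fin.ext (by simpa using congrArg Fin.val h)))
    · exact (isCoprime_X_sub_C_of_eval_ne (T ⟨i, hi⟩) x₀ (hx₀ _)).symm
    · exact isCoprime_X_sub_C_of_eval_ne (T ⟨j, hj⟩) x₀ (hx₀ _)
    · exfalso
      apply hij
      have : (i : ℕ) = 4 := by omega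
      have : (j : ℕ) = 4 := by omega
      exact Fin.ext (by omega)
  obtain ⟨F, hF⟩ := Ideal.quotientInfToPiQuotient_surj hpair
    (fun i => Ideal.Quotient.mk _ (t i))
  obtain ⟨f, rfl⟩ := Ideal.Quotient.mk_surjective F
  have hdvd : ∀ i, m i ∣ f - t i := by
    intro i
    have h1 := congrFun hF i
    rw [Ideal.quotientInfToPiQuotient_mk'] at h1
    rwa [Ideal.Quotient.eq, Ideal.mem_span_singleton] at h1
  -- the big modulus P
  set P : k[X] := (X - C x₀) * ∏ i, T i with hP
  have hPmonic : P.Monic := (monic_X_sub_C x₀).mul (monic_prod_of_monic _ _ fun i _ => hTmonic i)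
  have hPdeg : P.natDegree = (κ 0 + κ 1 + κ 2 + κ 3) + 1 := by
    rw [hP, Monic.natDegree_mul (monic_X_sub_C x₀) (monic_prod_of_monic _ _ fun i _ => hTmonic i),
      natDegree_X_sub_C, natDegree_prod _ _ (fun i _ => (hTmonic i).ne_zero)]
    simp [Fin.sum_univ_four, hTdeg]
    ring
  have hTdvdP : ∀ i : Fin 4, T i ∣ P := fun i =>
    Dvd.dvd.mul_left (Finset.dvd_prod_of_mem T (Finset.mem_univ i)) _
  have hXdvdP : (X - C x₀) ∣ P := Dvd.intro _ rfl
  -- reduce f modulo P and pad the degree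
  set f' : k[X] := f %ₘ P with hf'
  have hPdvd : P ∣ f - f' := ⟨f /ₘ P, by
    have h := modByMonic_add_div f P
    rw [hf']
    linear_combination -h⟩
  set A : k[X] := f' + X ^ (a - ((κ 0 + κ 1 + κ 2 + κ 3) + 1)) * P with hA
  have hXP : (X ^ (a - ((κ 0 + κ 1 + κ 2 + κ 3) + 1)) * P).Monic :=
    (monic_X_pow _).mul hPmonic
  have hXPdeg : (X ^ (a - ((κ 0 + κ 1 + κ 2 + κ 3) + 1)) * P).natDegree = a := by
    rw [Monic.natDegree_mul (monic_X_pow _) hPmonic, natDegree_X_pow, hPdeg]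
    omega
  have hXPdeg' : (X ^ (a - ((κ 0 + κ 1 + κ 2 + κ 3) + 1)) * P).degree = (a : WithBot ℕ) := by
    rw [degree_eq_natDegree hXP.ne_zero, hXPdeg]
  have hf'deg : f'.degree < (a : WithBot ℕ) := by
    calc f'.degree < P.degree := degree_modByMonic_lt f hPmonic
      _ = (P.natDegree : WithBot ℕ) := degree_eq_natDegree hPmonic.ne_zero
      _ ≤ (a : WithBot ℕ) := by
          rw [hPdeg]
          exact_mod_cast (by omega : κ 0 + κ 1 + κ 2 + κ 3 + 1 ≤ a)
  have hAdeg : A.degree = (a : WithBot ℕ) := by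
    rw [hA, degree_add_eq_right_of_degree_lt (by rw [hXPdeg']; exact hf'deg), hXPdeg']
  -- divisibility facts for A
  have hAdvd : ∀ i : Fin 5, m i ∣ A - t i := by
    intro i
    have h1 : m i ∣ P := by
      by_cases hi : (i : ℕ) < 4
      · simpa [hm, hi] using hTdvdP ⟨i, hi⟩
      · simpa [hm, hi] using hXdvdP
    have h2 : m i ∣ f - t i := hdvd i
    have h3 : m i ∣ f - f' := dvd_trans h1 hPdvd
    have : A - t i = (f - t i) - (f - f') + X ^ (a - ((κ 0 + κ 1 + κ 2 + κ 3) + 1)) * P := by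
      rw [hA]; ring
    rw [this]
    exact dvd_add (dvd_sub h2 h3) (Dvd.dvd.mul_left h1 _)
  refine ⟨A, 1, isCoprime_one_right, le_of_eq hAdeg, ?_, ?_, ?_, ?_⟩
  · rw [degree_one]
    exact_mod_cast Nat.zero_le a
  · rw [hAdeg, degree_one]
    exact max_eq_left (by exact_mod_cast Nat.zero_le a)
  · intro i
    have hj : ((i.castSucc : Fin 5) : ℕ) < 4 := by simpa using i.isLt
    have h := hAdvd i.castSucc
    simp only [hm, ht, hj, dif_pos] at h
    have heq : (⟨((i.castSucc : Fin 5) : ℕ), hj⟩ : Fin 4) = i := by ext; simp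
    rw [heq] at h
    rwa [mul_one]
  · have h := hAdvd (Fin.last 4)
    have h4 : ¬ ((Fin.last 4 : Fin 5) : ℕ) < 4 := by simp
    simp only [hm, ht, h4, dif_neg, not_false_iff] at h
    have h0 : (A - C y₀).eval x₀ = 0 := by
      obtain ⟨q, hq⟩ := h
      rw [hq]
      simp
    rw [eval_one, mul_one]
    have := sub_eq_zero.mp (by simpa using h0)
    simpa using this
end

section
/- Let Q be a finite lattice with least element ⊥ and greatest element ⊤, and let ch(Q) be its poset of chains. Then: (a) every closed interval [f, f′] in ch(Q) is finite, so that ch(Q) is a locally finite partial order and its Möbius function μ is defined by μ(f, f) = 1 and μ(f, f′) = −∑_{f ≤ g < f′} μ(f, g) for f < f′; and (b) if f₀, f ∈ ch(Q) satisfy f₀ ≤ f and f is not essential over f₀, then μ(f₀, f) = 0. -/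
/-- A chain in a bounded lattice `Q`: a monotone function `f : ℕ ∪ {∞} → Q` with `f 0 = ⊥`,
`f ∞ = ⊤`, and `f n = ⊤` for all sufficiently large `n : ℕ`. -/
def IsLatticeChain (Q : Type*) [Lattice Q] [BoundedOrder Q] (f : ℕ∞ → Q) : Prop :=
  Monotone f ∧ f 0 = ⊥ ∧ f ⊤ = ⊤ ∧ ∃ N : ℕ, ∀ n : ℕ, N ≤ n → f n = ⊤

/-- The poset `ch(Q)` of chains of the bounded lattice `Q`. -/
def LatticeChain (Q : Type*) [Lattice Q] [BoundedOrder Q] : Type _ :=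
  {f : ℕ∞ → Q // IsLatticeChain Q f}

/-- `f ≤ f′` in `ch(Q)` iff `f′ n ≤ f n` in `Q` for all `n`. -/
instance (Q : Type*) [Lattice Q] [BoundedOrder Q] : PartialOrder (LatticeChain Q) where
  le f g := ∀ n, g.1 n ≤ f.1 n
  le_refl f n := le_refl _
  le_trans f g h hfg hgh n := (hgh n).trans (hfg n)
  le_antisymm f g hfg hgf := Subtype.ext (funext fun n => le_antisymm (hgf n) (hfg n))

/-- `g` is essential over `f₀` if `g` is the least upper bound in `ch(Q)` of a finite set of
covers of `f₀` (the least upper bound of the empty set being `f₀` itself). -/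
def Essential {Q : Type*} [Lattice Q] [BoundedOrder Q] (f₀ g : LatticeChain Q) : Prop :=
  ∃ s : Set (LatticeChain Q), s.Finite ∧ (∀ h ∈ s, f₀ ⋖ h) ∧ IsLUB (insert f₀ s) g

section Aux
variable {Q : Type*} [Lattice Q] [BoundedOrder Q]

noncomputable instance {Q : Type*} [Lattice Q] [BoundedOrder Q] :
    DecidableEq (LatticeChain Q) := Classical.decEq _

lemma LatticeChain.le_def {f g : LatticeChain Q} : f ≤ g ↔ ∀ n, g.1 n ≤ f.1 n := Iff.rfl

instance : SemilatticeSup (LatticeChain Q) :=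
  { (inferInstance : PartialOrder (LatticeChain Q)) with
    sup := fun g h => ⟨fun n => g.1 n ⊓ h.1 n, g.2.1.inf h.2.1,
      by simp [g.2.2.1, h.2.2.1],
      by simp [g.2.2.2.1, h.2.2.2.1],
      by
        obtain ⟨N₁, h₁⟩ := g.2.2.2.2
        obtain ⟨N₂, h₂⟩ := h.2.2.2.2
        exact ⟨max N₁ N₂, fun n hn => by
          show g.1 n ⊓ h.1 n = ⊤
          rw [h₁ n (le_trans (le_max_left _ _) hn), h₂ n (le_trans (le_max_right _ _) hn),
            inf_idem]⟩⟩
    le_sup_left := fun g h n => inf_le_left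
    le_sup_right := fun g h n => inf_le_right
    sup_le := fun g h k hg hk n => le_inf (hg n) (hk n) }

variable [Fintype Q]

lemma icc_finite (f f' : LatticeChain Q) : (Set.Icc f f').Finite := by
  obtain ⟨N, hN⟩ := f'.2.2.2.2
  have hinj : Function.Injective
      (fun g : Set.Icc f f' => (fun i : Fin (N + 1) => g.1.1 (i : ℕ) : Fin (N + 1) → Q)) := by
    intro g h hgh
    apply Subtype.ext
    apply Subtype.ext
    apply funext
    intro n
    induction n using ENat.recTopCoe with
    | top => rw [g.1.2.2.2.1, h.1.2.2.2.1]
    | coe n =>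
      rcases le_or_gt n N with hn | hn
      · have := congrFun hgh ⟨n, Nat.lt_succ_of_le hn⟩
        simpa using this
      · have hg : g.1.1 n = ⊤ := top_le_iff.mp (by rw [← hN n hn.le]; exact g.2.2 n)
        have hh : h.1.1 n = ⊤ := top_le_iff.mp (by rw [← hN n hn.le]; exact h.2.2 n)
        rw [hg, hh]
  have : Finite (Set.Icc f f') := Finite.of_injective _ hinj
  exact Set.toFinite _

variable (μ : LatticeChain Q → LatticeChain Q → ℤ)
  (hμ1 : ∀ f, μ f f = 1)
  (hμ2 : ∀ f f' : LatticeChain Q, f < f' → μ f f' = -∑ᶠ g ∈ Set.Ico f f', μ f g)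

include hμ2 in
lemma sum_Icc_eq_zero {f₀ f : LatticeChain Q} (h : f₀ < f) :
    ∑ z ∈ (icc_finite f₀ f).toFinset, μ f₀ z = 0 := by
  classical
  have hIco : (Set.Ico f₀ f).Finite := (icc_finite f₀ f).subset Set.Ico_subset_Icc_self
  have h2 := hμ2 f₀ f h
  rw [finsum_mem_eq_finite_toFinset_sum _ hIco] at h2
  have hsplit : (icc_finite f₀ f).toFinset = insert f hIco.toFinset := by
    ext z
    simp only [Set.Finite.mem_toFinset, Set.mem_Icc, Finset.mem_insert, Set.mem_Ico]
    constructor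
    · rintro ⟨h1, h2⟩
      rcases eq_or_lt_of_le h2 with rfl | h2
      · exact Or.inl rfl
      · exact Or.inr ⟨h1, h2⟩
    · rintro (rfl | ⟨h1, h2⟩)
      · exact ⟨h.le, le_rfl⟩
      · exact ⟨h1, h2.le⟩
  rw [hsplit, Finset.sum_insert (by simp [Set.mem_Ico]), h2]
  ring

include hμ2 in
lemma weisner : ∀ n : ℕ, ∀ f₀ a f : LatticeChain Q, f₀ < a → a ≤ f →
    (icc_finite a f).toFinset.card ≤ n →
    ∑ z ∈ (icc_finite f₀ f).toFinset.filter (fun z => z ⊔ a = f), μ f₀ z = 0 := by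
  classical
  intro n
  induction n with
  | zero =>
    intro f₀ a f h1 h2 hcard
    have hm : f ∈ (icc_finite a f).toFinset := by
      simp only [Set.Finite.mem_toFinset, Set.mem_Icc]
      exact ⟨h2, le_rfl⟩
    have := Finset.card_pos.mpr ⟨f, hm⟩
    omega
  | succ n ih =>
    intro f₀ a f h1 h2 hcard
    have h0 : f₀ < f := h1.trans_le h2
    set I := (icc_finite f₀ f).toFinset with hI
    set J := (icc_finite a f).toFinset with hJ
    have hmaps : ∀ z ∈ I, z ⊔ a ∈ J := by
      intro z hz
      simp only [hI, hJ, Set.Finite.mem_toFinset, Set.mem_Icc] at hz ⊢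
      exact ⟨le_sup_right, sup_le hz.2 h2⟩
    have key := Finset.sum_fiberwise_of_maps_to hmaps (μ f₀)
    rw [sum_Icc_eq_zero μ hμ2 h0] at key
    have hfJ : f ∈ J := by
      simp only [hJ, Set.Finite.mem_toFinset, Set.mem_Icc]
      exact ⟨h2, le_rfl⟩
    rw [← Finset.add_sum_erase J _ hfJ] at key
    have hrest : ∀ w ∈ J.erase f,
        ∑ z ∈ I.filter (fun z => z ⊔ a = w), μ f₀ z = 0 := by
      intro w hw
      obtain ⟨hwne, hwJ⟩ := Finset.mem_erase.mp hw
      simp only [hJ, Set.Finite.mem_toFinset, Set.mem_Icc] at hwJ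
      have hfilter : I.filter (fun z => z ⊔ a = w)
          = (icc_finite f₀ w).toFinset.filter (fun z => z ⊔ a = w) := by
        ext z
        simp only [hI, Finset.mem_filter, Set.Finite.mem_toFinset, Set.mem_Icc]
        constructor
        · rintro ⟨⟨hz1, hz2⟩, hz3⟩
          exact ⟨⟨hz1, le_sup_left.trans hz3.le⟩, hz3⟩
        · rintro ⟨⟨hz1, hz2⟩, hz3⟩
          exact ⟨⟨hz1, hz2.trans hwJ.2⟩, hz3⟩
      rw [hfilter]
      apply ih f₀ a w h1 hwJ.1
      have hsub : (icc_finite a w).toFinset ⊂ J := by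
        constructor
        · intro x hx
          simp only [hJ, Set.Finite.mem_toFinset, Set.mem_Icc] at hx ⊢
          exact ⟨hx.1, hx.2.trans hwJ.2⟩
        · intro hsub'
          have := hsub' hfJ
          simp only [Set.Finite.mem_toFinset, Set.mem_Icc] at this
          exact hwne (le_antisymm hwJ.2 this.2)
      have := Finset.card_lt_card hsub
      omega
    rw [Finset.sum_eq_zero hrest, add_zero] at key
    exact key

include hμ2 in
lemma mu_eq_zero : ∀ n : ℕ, ∀ f₀ f : LatticeChain Q, f₀ ≤ f →
    (icc_finite f₀ f).toFinset.card ≤ n → ¬ Essential f₀ f → μ f₀ f = 0 := by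
  classical
  intro n
  induction n with
  | zero =>
    intro f₀ f hle hcard
    have hm : f ∈ (icc_finite f₀ f).toFinset := by
      simp only [Set.Finite.mem_toFinset, Set.mem_Icc]
      exact ⟨hle, le_rfl⟩
    have := Finset.card_pos.mpr ⟨f, hm⟩
    omega
  | succ n ih =>
    intro f₀ f hle hcard hne
    rcases eq_or_lt_of_le hle with rfl | hlt
    · exact absurd ⟨∅, Set.finite_empty, by simp, by simp only [insert_empty_eq]; exact isLUB_singleton⟩ hne
    · obtain ⟨a, haI, hamin⟩ :=
        ((icc_finite f₀ f).subset Set.Ioc_subset_Icc_self).exists_minimal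
          ⟨f, hlt, le_rfl⟩
      replace hamin : ∀ g ∈ Set.Ioc f₀ f, g ≤ a → a = g := fun g hg h => le_antisymm (hamin hg h) h
      have hcov : f₀ ⋖ a := by
        refine ⟨haI.1, fun g hg hga => ?_⟩
        exact absurd (hamin g ⟨hg, hga.le.trans haI.2⟩ hga.le) hga.ne'
      have hW := weisner μ hμ2 _ f₀ a f haI.1 haI.2 le_rfl
      set I := (icc_finite f₀ f).toFinset with hI
      have hfmem : f ∈ I.filter (fun z => z ⊔ a = f) := by
        simp only [hI, Finset.mem_filter, Set.Finite.mem_toFinset, Set.mem_Icc]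
        exact ⟨⟨hle, le_rfl⟩, sup_eq_left.mpr haI.2⟩
      rw [← Finset.add_sum_erase _ _ hfmem] at hW
      have hzero : ∀ z ∈ (I.filter (fun z => z ⊔ a = f)).erase f, μ f₀ z = 0 := by
        intro z hz
        obtain ⟨hzne, hzmem⟩ := Finset.mem_erase.mp hz
        obtain ⟨hzI, hza⟩ := Finset.mem_filter.mp hzmem
        simp only [hI, Set.Finite.mem_toFinset, Set.mem_Icc] at hzI
        by_contra hz0
        have hzE : Essential f₀ z := by
          by_contra hE
          refine hz0 (ih f₀ z hzI.1 ?_ hE)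
          have hsub : (icc_finite f₀ z).toFinset ⊂ I := by
            constructor
            · intro x hx
              simp only [hI, Set.Finite.mem_toFinset, Set.mem_Icc] at hx ⊢
              exact ⟨hx.1, hx.2.trans hzI.2⟩
            · intro hsub'
              have := hsub' (by
                simp only [hI, Set.Finite.mem_toFinset, Set.mem_Icc]
                exact ⟨hle, le_rfl⟩)
              simp only [Set.Finite.mem_toFinset, Set.mem_Icc] at this
              exact hzne (le_antisymm hzI.2 this.2)
          have := Finset.card_lt_card hsub
          omega
        obtain ⟨s, hsfin, hscov, hslub⟩ := hzE
        apply hne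
        refine ⟨insert a s, hsfin.insert a, ?_, ?_⟩
        · rintro h (rfl | hh)
          · exact hcov
          · exact hscov h hh
        · have hu : IsLUB (insert f₀ s ∪ {a}) (z ⊔ a) := hslub.union isLUB_singleton
          have hset : insert f₀ (insert a s) = insert f₀ s ∪ {a} := by
            ext x; simp; tauto
          rw [hset]
          rw [hza] at hu
          exact hu
      rw [Finset.sum_eq_zero hzero, add_zero] at hW
      exact hW

end Aux

/-- For a finite bounded lattice `Q`: (a) every closed interval of the poset
`ch(Q)` of chains is finite, so the Möbius function `μ` of `ch(Q)` is defined by the recursion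
`μ(f,f) = 1`, `μ(f,f′) = −∑_{f ≤ g < f′} μ(f,g)`; (b) if `f₀ ≤ f` and `f` is not essential
over `f₀`, then `μ(f₀, f) = 0`. -/
theorem moebius_vanishes_on_nonessential (Q : Type*) [Lattice Q] [BoundedOrder Q] [Fintype Q] :
    (∀ f f' : LatticeChain Q, (Set.Icc f f').Finite) ∧
    ∀ μ : LatticeChain Q → LatticeChain Q → ℤ,
      (∀ f, μ f f = 1) →
      (∀ f f' : LatticeChain Q, f < f' → μ f f' = -∑ᶠ g ∈ Set.Ico f f', μ f g) →
      ∀ f₀ f : LatticeChain Q, f₀ ≤ f → ¬ Essential f₀ f → μ f₀ f = 0 :=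
  ⟨fun f f' => icc_finite f f',
   fun μ _ h2 f₀ f hle hne => mu_eq_zero μ h2 _ f₀ f hle le_rfl hne⟩
end

section
/- Let k be a field, let e ≥ 1 and n ≥ 1 be integers, and let g₀, …, g_n ∈ k[T] be polynomials that generate the unit ideal of k[T] (i.e. have no common irreducible factor), such that deg g_j ≤ e for all j and deg g_{j₀} = e for some index j₀. Then for every polynomial p ∈ k[T] with deg p ≤ 2e − 1 there exist polynomials h₀, …, h_n ∈ k[T] with deg h_j ≤ e − 1 for all j and ∑_{j=0}^{n} g_j·h_j = p. -/
open Polynomial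

private lemma withbot_lt_to_le_pred {d : WithBot ℕ} {e : ℕ} (he : 1 ≤ e)
    (h : d < (e : WithBot ℕ)) : d ≤ ((e - 1 : ℕ) : WithBot ℕ) := by
  cases d with
  | bot => exact bot_le
  | coe m =>
    rw [Nat.cast_withBot] at h ⊢
    rw [WithBot.coe_lt_coe] at h
    exact WithBot.coe_le_coe.mpr (Nat.le_sub_one_of_lt h)

/-- If `g₀, …, g_n` generate the unit ideal of `k[T]`, have degrees at most
`e`, and one of them has degree exactly `e`, then every polynomial of degree at most `2e - 1`
can be written as `∑ g_j · h_j` with all `deg h_j ≤ e - 1`. -/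
theorem exists_combination_of_bounded_degree {k : Type*} [Field k]
    (e n : ℕ) (he : 1 ≤ e) (hn : 1 ≤ n)
    (g : Fin (n + 1) → k[X])
    (hunit : Ideal.span (Set.range g) = ⊤)
    (hdeg : ∀ j, (g j).degree ≤ (e : WithBot ℕ))
    (hdeg' : ∃ j₀, (g j₀).degree = (e : WithBot ℕ)) :
    ∀ p : k[X], p.degree ≤ ((2 * e - 1 : ℕ) : WithBot ℕ) →
      ∃ h : Fin (n + 1) → k[X], (∀ j, (h j).degree ≤ ((e - 1 : ℕ) : WithBot ℕ)) ∧
        ∑ j, g j * h j = p := by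
  obtain ⟨j₀, hj₀⟩ := hdeg'
  intro p hp
  -- obtain a combination ∑ c j * g j = 1
  have h1 : (1 : k[X]) ∈ Ideal.span (Set.range g) := by rw [hunit]; trivial
  obtain ⟨c, hc⟩ := Ideal.mem_span_range_iff_exists_fun.mp h1
  set a : Fin (n + 1) → k[X] := fun j => p * c j with ha
  have hsum : ∑ j, g j * a j = p := by
    have : ∑ j, g j * a j = p * ∑ j, c j * g j := by
      rw [Finset.mul_sum]; apply Finset.sum_congr rfl; intro j _; ring
    rw [this, hc, mul_one]
  -- the leading polynomial
  have hg0ne : g j₀ ≠ 0 := by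
    intro h; rw [h, degree_zero] at hj₀; exact absurd hj₀.symm (by simp)
  set lc : k := (g j₀).leadingCoeff with hlc
  have hlcne : lc ≠ 0 := leadingCoeff_ne_zero.mpr hg0ne
  set m : k[X] := g j₀ * C lc⁻¹ with hm
  have hmon : m.Monic := monic_mul_leadingCoeff_inv hg0ne
  have hmdeg : m.degree = (e : WithBot ℕ) := by
    rw [hm, degree_mul_leadingCoeff_inv _ hg0ne, hj₀]
  set r : Fin (n + 1) → k[X] := fun j => a j %ₘ m with hr
  set q : Fin (n + 1) → k[X] := fun j => a j /ₘ m with hq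
  have hdiv : ∀ j, r j + m * q j = a j := fun j => modByMonic_add_div (a j) m
  have hrdeg : ∀ j, (r j).degree ≤ ((e - 1 : ℕ) : WithBot ℕ) := by
    intro j
    have := degree_modByMonic_lt (a j) hmon
    rw [hmdeg] at this
    exact withbot_lt_to_le_pred he this
  set h : Fin (n + 1) → k[X] := fun j =>
    if j = j₀ then a j₀ + C lc⁻¹ * ∑ i ∈ ({j₀}ᶜ : Finset (Fin (n + 1))), q i * g i
    else r j with hh
  have hcompl : ∀ i ∈ ({j₀}ᶜ : Finset (Fin (n + 1))), h i = r i := by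
    intro i hi
    rw [Finset.mem_compl, Finset.mem_singleton] at hi
    simp [hh, hi]
  have key : ∑ j, g j * h j = p := by
    set S := ∑ i ∈ ({j₀}ᶜ : Finset (Fin (n + 1))), q i * g i with hS
    rw [Fintype.sum_eq_add_sum_compl j₀ (fun j => g j * h j)]
    have hhj₀ : h j₀ = a j₀ + C lc⁻¹ * S := by simp [hh]
    have hcs : ∑ i ∈ ({j₀}ᶜ : Finset (Fin (n + 1))), g i * h i
        = ∑ i ∈ ({j₀}ᶜ : Finset (Fin (n + 1))), (g i * a i - m * (q i * g i)) :=
      Finset.sum_congr rfl fun i hi => by rw [hcompl i hi, ← hdiv i]; ring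
    rw [hhj₀, hcs, Finset.sum_sub_distrib, ← Finset.mul_sum, ← hS]
    have h1' : g j₀ * (a j₀ + C lc⁻¹ * S) = g j₀ * a j₀ + m * S := by rw [hm]; ring
    have hsplit : g j₀ * a j₀ + ∑ i ∈ ({j₀}ᶜ : Finset (Fin (n + 1))), g i * a i = p := by
      rw [← Fintype.sum_eq_add_sum_compl j₀ (fun i => g i * a i)]; exact hsum
    rw [h1']
    linear_combination hsplit
  refine ⟨h, ?_, key⟩
  intro j
  by_cases hj : j = j₀
  · subst hj
    -- bound degree of h j via g j * h j = p - ∑ rest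
    have heq : g j * h j = p - ∑ i ∈ ({j}ᶜ : Finset (Fin (n + 1))), g i * r i := by
      have h2 : ∑ i ∈ ({j}ᶜ : Finset (Fin (n + 1))), g i * r i
          = ∑ i ∈ ({j}ᶜ : Finset (Fin (n + 1))), g i * h i :=
        Finset.sum_congr rfl fun i hi => by rw [hcompl i hi]
      rw [eq_sub_iff_add_eq, h2, ← Fintype.sum_eq_add_sum_compl j (fun i => g i * h i)]
      exact key
    have hbound : (g j * h j).degree ≤ ((2 * e - 1 : ℕ) : WithBot ℕ) := by
      rw [heq]
      apply le_trans (degree_sub_le _ _)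
      apply max_le hp
      apply le_trans (degree_sum_le _ _)
      apply Finset.sup_le
      intro i _
      apply le_trans (degree_mul_le _ _)
      calc (g i).degree + (r i).degree ≤ (e : WithBot ℕ) + ((e - 1 : ℕ) : WithBot ℕ) :=
            add_le_add (hdeg i) (hrdeg i)
        _ = ((2 * e - 1 : ℕ) : WithBot ℕ) := by
            rw [← Nat.cast_add]; congr 1; omega
    by_cases hz : h j = 0
    · rw [hz, degree_zero]; exact bot_le
    · rw [degree_mul, hj₀] at hbound
      have h2e : ((2 * e - 1 : ℕ) : WithBot ℕ) = (e : WithBot ℕ) + ((e - 1 : ℕ) : WithBot ℕ) := by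
        rw [← Nat.cast_add]; congr 1; omega
      rw [h2e] at hbound
      exact (WithBot.add_le_add_iff_left (by exact_mod_cast WithBot.coe_ne_bot)).mp hbound
  · have : h j = r j := by simp [hh, hj]
    rw [this]; exact hrdeg j
end
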